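/- arXiv:1503.02767 — 7 statements merged into one kernel-verified Lean document; each statement's English description precedes it below -/
import Mathlib

section
/- Let p be prime and n ≥ 1. A complete set of representatives for the double cosets K_0(p^n)\GL_2(Z_p)/K_0(p^n), where K_0(p^n) is the subgroup of GL_2(Z_p) of matrices whose lower-left entry lies in p^n Z_p, is given by the n+1 matrices: the identity, w = [[0,-1],[1,0]], and y(p^r) = [[1,0],[p^r,1]] for 1 ≤ r ≤ n-1. That is, every element of GL_2(Z_p) lies in exactly one double coset K_0(p^n) g K_0(p^n) with g among these matrices. -/
open Matrix

/-- `K₀(pⁿ)` inside `GL₂(ℤ_p)`: invertible matrices over `ℤ_p` whose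
lower-left entry lies in `pⁿ ℤ_p`. -/
def K0Z (p : ℕ) [Fact p.Prime] (n : ℕ) : Set (Matrix (Fin 2) (Fin 2) ℤ_[p]) :=
  {g | IsUnit g.det ∧ (p : ℤ_[p]) ^ n ∣ g 1 0}

/-- w = [[0,-1],[1,0]] -/
noncomputable def wMat (p : ℕ) [Fact p.Prime] : Matrix (Fin 2) (Fin 2) ℤ_[p] :=
  !![0, -1; 1, 0]

/-- y(t) = [[1,0],[t,1]] -/
noncomputable def yMat (p : ℕ) [Fact p.Prime] (t : ℤ_[p]) : Matrix (Fin 2) (Fin 2) ℤ_[p] :=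
  !![1, 0; t, 1]

/-- The set of double coset representatives: `1`, `w`, and `y(p^r)` for `1 ≤ r ≤ n-1`. -/
def repsSet (p : ℕ) [Fact p.Prime] (n : ℕ) : Set (Matrix (Fin 2) (Fin 2) ℤ_[p]) :=
  {1, wMat p} ∪ {m | ∃ r : ℕ, 1 ≤ r ∧ r ≤ n - 1 ∧ m = yMat p ((p : ℤ_[p]) ^ r)}

section Aux

variable {p : ℕ} [Fact p.Prime]

lemma aux_not_isUnit_iff_dvd (z : ℤ_[p]) : ¬ IsUnit z ↔ (p : ℤ_[p]) ∣ z :=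
  PadicInt.not_isUnit_iff.trans (PadicInt.norm_lt_one_iff_dvd z)

lemma aux_not_unit_of_dvd {z : ℤ_[p]} (h : (p : ℤ_[p]) ∣ z) : ¬ IsUnit z := by
  intro hz
  exact PadicInt.prime_p.not_unit (isUnit_of_dvd_unit h hz)

lemma aux_mul3_entry (A B C : Matrix (Fin 2) (Fin 2) ℤ_[p]) :
    (A*B*C) 1 0 = (A 1 0 * B 0 0 + A 1 1 * B 1 0) * C 0 0
      + (A 1 0 * B 0 1 + A 1 1 * B 1 1) * C 1 0 := by
  simp [Matrix.mul_apply, Fin.sum_univ_two]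

lemma aux_diag_units {k : Matrix (Fin 2) (Fin 2) ℤ_[p]} (hd : IsUnit k.det)
    (hc : (p : ℤ_[p]) ∣ k 1 0) : IsUnit (k 0 0) ∧ IsUnit (k 1 1) := by
  rw [Matrix.det_fin_two] at hd
  constructor
  · by_contra h
    rw [aux_not_isUnit_iff_dvd] at h
    exact aux_not_unit_of_dvd (dvd_sub (h.mul_right _) (hc.mul_left _)) hd
  · by_contra h
    rw [aux_not_isUnit_iff_dvd] at h
    exact aux_not_unit_of_dvd (dvd_sub (h.mul_left _) (hc.mul_left _)) hd

lemma aux_isUnit_add {u x : ℤ_[p]} (hu : IsUnit u) (hx : (p : ℤ_[p]) ∣ x) :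
    IsUnit (u + x) := by
  by_contra h
  rw [aux_not_isUnit_iff_dvd] at h
  have : (p : ℤ_[p]) ∣ u := by
    have := dvd_sub h hx
    simpa using this
  exact aux_not_unit_of_dvd this hu

/-- classification of the lower-left entry of elements of the double cosets -/
lemma aux_class {n : ℕ} (hn : 1 ≤ n) {m g : Matrix (Fin 2) (Fin 2) ℤ_[p]}
    (hm : m ∈ repsSet p n)
    (hex : ∃ k1 ∈ K0Z p n, ∃ k2 ∈ K0Z p n, g = k1 * m * k2) :
    (m = 1 ∧ (p : ℤ_[p])^n ∣ g 1 0) ∨ (m = wMat p ∧ IsUnit (g 1 0)) ∨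
    (∃ r : ℕ, 1 ≤ r ∧ r ≤ n - 1 ∧ m = yMat p ((p : ℤ_[p])^r) ∧
      (p : ℤ_[p])^r ∣ g 1 0 ∧ ¬ (p : ℤ_[p])^(r+1) ∣ g 1 0) := by
  obtain ⟨k1, hk1, k2, hk2, rfl⟩ := hex
  have hpk1 : (p : ℤ_[p]) ∣ k1 1 0 := dvd_trans (dvd_pow_self _ (by omega)) hk1.2
  have hpk2 : (p : ℤ_[p]) ∣ k2 1 0 := dvd_trans (dvd_pow_self _ (by omega)) hk2.2
  have hu1 := aux_diag_units hk1.1 hpk1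
  have hu2 := aux_diag_units hk2.1 hpk2
  simp only [repsSet, Set.mem_union, Set.mem_insert_iff, Set.mem_singleton_iff,
    Set.mem_setOf_eq] at hm
  rcases hm with (rfl | rfl) | ⟨r, hr1, hr2, rfl⟩
  · left
    refine ⟨rfl, ?_⟩
    rw [aux_mul3_entry]
    simp only [Matrix.one_apply_eq, Matrix.one_apply_ne (by decide : (1:Fin 2) ≠ 0),
      Matrix.one_apply_ne (by decide : (0:Fin 2) ≠ 1), mul_one, mul_zero, add_zero, zero_add]
    exact dvd_add (hk1.2.mul_right _) (hk2.2.mul_left _)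
  · right; left
    refine ⟨rfl, ?_⟩
    rw [aux_mul3_entry]
    have h1 : (k1 1 0 * wMat p 0 0 + k1 1 1 * wMat p 1 0) * k2 0 0
        + (k1 1 0 * wMat p 0 1 + k1 1 1 * wMat p 1 1) * k2 1 0
        = k1 1 1 * k2 0 0 + (-(k1 1 0 * k2 1 0)) := by
      simp [wMat]
    rw [h1]
    exact aux_isUnit_add (hu1.2.mul hu2.1) (dvd_neg.mpr (hpk1.mul_right _))
  · right; right
    refine ⟨r, hr1, hr2, rfl, ?_, ?_⟩
    · rw [aux_mul3_entry]
      have h1 : (k1 1 0 * yMat p ((p:ℤ_[p])^r) 0 0 + k1 1 1 * yMat p ((p:ℤ_[p])^r) 1 0) * k2 0 0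
          + (k1 1 0 * yMat p ((p:ℤ_[p])^r) 0 1 + k1 1 1 * yMat p ((p:ℤ_[p])^r) 1 1) * k2 1 0
          = k1 1 0 * k2 0 0 + (p:ℤ_[p])^r * (k1 1 1 * k2 0 0) + k1 1 1 * k2 1 0 := by
        simp [yMat]; ring
      rw [h1]
      have hrn : r ≤ n := by omega
      exact dvd_add (dvd_add ((dvd_trans (pow_dvd_pow _ hrn) hk1.2).mul_right _)
        (dvd_mul_right _ _)) ((dvd_trans (pow_dvd_pow _ hrn) hk2.2).mul_left _)
    · intro hdvd
      rw [aux_mul3_entry] at hdvd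
      have h1 : (k1 1 0 * yMat p ((p:ℤ_[p])^r) 0 0 + k1 1 1 * yMat p ((p:ℤ_[p])^r) 1 0) * k2 0 0
          + (k1 1 0 * yMat p ((p:ℤ_[p])^r) 0 1 + k1 1 1 * yMat p ((p:ℤ_[p])^r) 1 1) * k2 1 0
          = (p:ℤ_[p])^r * (k1 1 1 * k2 0 0) + (k1 1 0 * k2 0 0 + k1 1 1 * k2 1 0) := by
        simp [yMat]; ring
      rw [h1] at hdvd
      have hrn : r + 1 ≤ n := by omega
      have h2 : (p:ℤ_[p])^(r+1) ∣ k1 1 0 * k2 0 0 + k1 1 1 * k2 1 0 :=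
        dvd_add ((dvd_trans (pow_dvd_pow _ hrn) hk1.2).mul_right _)
          ((dvd_trans (pow_dvd_pow _ hrn) hk2.2).mul_left _)
      have h4 : (p:ℤ_[p])^(r+1) ∣ (p:ℤ_[p])^r * (k1 1 1 * k2 0 0) :=
        (dvd_add_left h2).mp hdvd
      rw [pow_succ] at h4
      have h5 : (p:ℤ_[p]) ∣ k1 1 1 * k2 0 0 :=
        (mul_dvd_mul_iff_left (pow_ne_zero r PadicInt.prime_p.ne_zero)).mp h4
      exact aux_not_unit_of_dvd h5 (hu1.2.mul hu2.1)

end Aux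

section Exist

variable {p : ℕ} [Fact p.Prime]

lemma aux_one_mem (n : ℕ) : (1 : Matrix (Fin 2) (Fin 2) ℤ_[p]) ∈ K0Z p n := by
  constructor
  · simp
  · simp [Matrix.one_apply]

lemma aux_w_exist {a b c d : ℤ_[p]} (hdet : IsUnit (a*d - b*c)) (hc : IsUnit c) (n : ℕ) :
    ∃ k1 ∈ K0Z p n, ∃ k2 ∈ K0Z p n, !![a,b;c,d] = k1 * wMat p * k2 := by
  obtain ⟨u, hu⟩ := hc
  set ic : ℤ_[p] := ↑u⁻¹ with hic_def
  have hic : c * ic = 1 := by rw [← hu]; exact u.mul_inv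
  have hic' : ic * c = 1 := by rw [← hu]; exact u.inv_mul
  refine ⟨!![1, a*ic; 0, 1], ⟨?_, ?_⟩, !![c, d; 0, a*ic*d - b], ⟨?_, ?_⟩, ?_⟩
  · simp [Matrix.det_fin_two]
  · simp
  · have : (!![c, d; 0, a*ic*d - b]).det = a*d - b*c := by
      simp [Matrix.det_fin_two]
      linear_combination a*d*hic
    rw [this]; exact hdet
  · simp
  · ext i j
    fin_cases i <;> fin_cases j <;>
      simp [wMat, Matrix.mul_apply, Fin.sum_univ_two]
    linear_combination (-a) * hic

lemma aux_y_exist {a b c d e : ℤ_[p]} (r : ℕ) (hdet : IsUnit (a*d - b*c))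
    (ha : IsUnit a) (he : IsUnit e) (hce : c = (p:ℤ_[p])^r * e) (n : ℕ) :
    ∃ k1 ∈ K0Z p n, ∃ k2 ∈ K0Z p n,
      !![a,b;c,d] = k1 * yMat p ((p:ℤ_[p])^r) * k2 := by
  obtain ⟨u, hu⟩ := ha
  obtain ⟨v, hv⟩ := he
  set ia : ℤ_[p] := ↑u⁻¹ with hia_def
  set ie : ℤ_[p] := ↑v⁻¹ with hie_def
  have hia : a * ia = 1 := by rw [← hu]; exact u.mul_inv
  have hia' : ia * a = 1 := by rw [← hu]; exact u.inv_mul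
  have hie : e * ie = 1 := by rw [← hv]; exact v.mul_inv
  have hie' : ie * e = 1 := by rw [← hv]; exact v.inv_mul
  have hiau : IsUnit ia := by rw [hia_def]; exact u⁻¹.isUnit
  have hieu : IsUnit ie := by rw [hie_def]; exact v⁻¹.isUnit
  refine ⟨!![a*ie, 0; 0, 1], ⟨?_, ?_⟩, !![e, e*ia*b; 0, d - c*ia*b], ⟨?_, ?_⟩, ?_⟩
  · have : (!![a*ie, 0; (0:ℤ_[p]), 1]).det = a * ie := by simp [Matrix.det_fin_two]
    rw [this]; exact (hu ▸ u.isUnit).mul hieu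
  · simp
  · have : (!![e, e*ia*b; (0:ℤ_[p]), d - c*ia*b]).det = (e*ia)*(a*d - b*c) := by
      simp [Matrix.det_fin_two]
      linear_combination (-(e*d)) * hia'
    rw [this]; exact ((hv ▸ v.isUnit).mul hiau).mul hdet
  · simp
  · ext i j
    fin_cases i <;> fin_cases j <;>
      simp [yMat, Matrix.mul_apply, Fin.sum_univ_two]
    · linear_combination (-a) * hie'
    · linear_combination (-(b*a*ia)) * hie' + (-b) * hia
    · linear_combination hce
    · linear_combination (ia*b) * hce

end Exist

/-- Every element of `GL₂(ℤ_p)` lies in exactly one double coset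
`K₀(pⁿ) g K₀(pⁿ)` with `g` among `1`, `w`, `y(p^r)` (`1 ≤ r ≤ n-1`). -/
theorem stmt0 (p : ℕ) [Fact p.Prime] (n : ℕ) (hn : 1 ≤ n)
    (g : Matrix (Fin 2) (Fin 2) ℤ_[p]) (hg : IsUnit g.det) :
    ∃! m, m ∈ repsSet p n ∧
      ∃ k1 ∈ K0Z p n, ∃ k2 ∈ K0Z p n, g = k1 * m * k2 := by
  classical
  have hpk : (p:ℤ_[p]) ∣ (p:ℤ_[p])^n := dvd_pow_self _ (by omega)
  by_cases h1 : (p:ℤ_[p])^n ∣ g 1 0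
  · refine ⟨1, ⟨by simp [repsSet], g, ⟨hg, h1⟩, 1, aux_one_mem n, by simp⟩, ?_⟩
    rintro m' ⟨hm', hex'⟩
    rcases aux_class hn hm' hex' with ⟨rfl, -⟩ | ⟨rfl, hcu⟩ | ⟨r, hr1, hr2, rfl, -, hnd⟩
    · rfl
    · exact absurd hcu (aux_not_unit_of_dvd (dvd_trans hpk h1))
    · exact absurd (dvd_trans (pow_dvd_pow _ (by omega : r+1 ≤ n)) h1) hnd
  · by_cases h2 : IsUnit (g 1 0)
    · have hdet : IsUnit (g 0 0 * g 1 1 - g 0 1 * g 1 0) := by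
        rwa [Matrix.det_fin_two] at hg
      obtain ⟨k1, hk1, k2, hk2, heq⟩ := aux_w_exist hdet h2 n
      refine ⟨wMat p, ⟨by simp [repsSet], k1, hk1, k2, hk2,
        (Matrix.eta_fin_two g).trans heq⟩, ?_⟩
      rintro m' ⟨hm', hex'⟩
      rcases aux_class hn hm' hex' with ⟨rfl, hd⟩ | ⟨rfl, -⟩ | ⟨r, hr1, hr2, rfl, hrd, -⟩
      · exact absurd h2 (aux_not_unit_of_dvd (dvd_trans hpk hd))
      · rfl
      · exact absurd h2 (aux_not_unit_of_dvd
          (dvd_trans (dvd_pow_self _ (by omega : r ≠ 0)) hrd))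
    · have hpd : (p:ℤ_[p]) ∣ g 1 0 := (aux_not_isUnit_iff_dvd _).mp h2
      have hS : ∃ k, ¬ (p:ℤ_[p])^k ∣ g 1 0 := ⟨n, h1⟩
      set m0 := Nat.find hS with hm0
      have hnd : ¬ (p:ℤ_[p])^m0 ∣ g 1 0 := Nat.find_spec hS
      have hm0n : m0 ≤ n := Nat.find_le h1
      have hm02 : 2 ≤ m0 := by
        by_contra h
        push_neg at h
        have : (p:ℤ_[p])^m0 ∣ g 1 0 := by
          rcases (by omega : m0 = 0 ∨ m0 = 1) with h' | h' <;> rw [h'] <;> simpa using hpd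
        exact hnd this
      set r := m0 - 1 with hrdef
      have hr1 : 1 ≤ r := by omega
      have hr2 : r ≤ n - 1 := by omega
      have hrd : (p:ℤ_[p])^r ∣ g 1 0 := by
        have := Nat.find_min hS (by omega : r < m0)
        simpa using this
      have hrnd : ¬ (p:ℤ_[p])^(r+1) ∣ g 1 0 := by
        rw [(by omega : r + 1 = m0)]; exact hnd
      obtain ⟨e, hce⟩ := hrd
      have he : IsUnit e := by
        by_contra h
        rw [aux_not_isUnit_iff_dvd] at h
        exact hrnd (by rw [pow_succ, hce]; exact mul_dvd_mul_left _ h)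
      have ha : IsUnit (g 0 0) := (aux_diag_units hg hpd).1
      have hdet : IsUnit (g 0 0 * g 1 1 - g 0 1 * g 1 0) := by
        rwa [Matrix.det_fin_two] at hg
      obtain ⟨k1, hk1, k2, hk2, heq⟩ := aux_y_exist r hdet ha he hce n
      have hrback : (p:ℤ_[p])^r ∣ g 1 0 := ⟨e, hce⟩
      refine ⟨yMat p ((p:ℤ_[p])^r), ⟨?_, k1, hk1, k2, hk2,
        (Matrix.eta_fin_two g).trans heq⟩, ?_⟩
      · simp only [repsSet, Set.mem_union, Set.mem_setOf_eq]
        exact Or.inr ⟨r, hr1, hr2, rfl⟩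
      · rintro m' ⟨hm', hex'⟩
        rcases aux_class hn hm' hex' with ⟨rfl, hd⟩ | ⟨rfl, hcu⟩ | ⟨s, hs1, hs2, rfl, hsd, hsnd⟩
        · exact absurd (dvd_trans (pow_dvd_pow _ (by omega : r+1 ≤ n)) hd) hrnd
        · exact absurd hcu (aux_not_unit_of_dvd hpd)
        · have hsr : s = r := by
            have ha' : ¬ r + 1 ≤ s := fun h => hrnd (dvd_trans (pow_dvd_pow _ h) hsd)
            have hb' : ¬ s + 1 ≤ r := fun h => hsnd (dvd_trans (pow_dvd_pow _ h) hrback)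
            omega
          rw [hsr]
end

section
/- Let p be prime, n ≥ 2, and n/2 ≤ r < n. Then K_0(p^n) y(p^r) K_0(p^n) is the disjoint union over s ∈ Z_p^* / (1 + p^{n-r} Z_p) of the left cosets d(s) y(p^r) K_0(p^n), where d(s) = diag(s,1) and y(t) = [[1,0],[t,1]]. In particular this double coset contains exactly p^{n-r-1}(p-1) left K_0(p^n)-cosets. -/
open Matrix

/-- d(s) = diag(s,1) -/
noncomputable def dMat (p : ℕ) [Fact p.Prime] (s : ℤ_[p]) :
    Matrix (Fin 2) (Fin 2) ℤ_[p] := !![s, 0; 0, 1]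

/-- The double coset `K g K`. -/
def dCosetZ (p : ℕ) [Fact p.Prime] (K : Set (Matrix (Fin 2) (Fin 2) ℤ_[p]))
    (g : Matrix (Fin 2) (Fin 2) ℤ_[p]) : Set (Matrix (Fin 2) (Fin 2) ℤ_[p]) :=
  {m | ∃ k1 ∈ K, ∃ k2 ∈ K, m = k1 * g * k2}

/-- The left coset `g K`. -/
def lCosetZ (p : ℕ) [Fact p.Prime] (K : Set (Matrix (Fin 2) (Fin 2) ℤ_[p]))
    (g : Matrix (Fin 2) (Fin 2) ℤ_[p]) : Set (Matrix (Fin 2) (Fin 2) ℤ_[p]) :=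
  {m | ∃ k ∈ K, m = g * k}

/-- Natural-number representatives for `ℤ_p^* / (1 + p^m ℤ_p)`:
`0 ≤ s < p^m` with `p ∤ s`. -/
def unitReps (p m : ℕ) : Finset ℕ :=
  (Finset.range (p ^ m)).filter (fun s => ¬ p ∣ s)

namespace Stmt4Aux
variable {p : ℕ} [hp : Fact p.Prime]

lemma isUnit_natCast_of_not_dvd {s : ℕ} (h : ¬ p ∣ s) : IsUnit (s : ℤ_[p]) := by
  by_contra hc
  rw [PadicInt.not_isUnit_iff] at hc
  have h2 : ‖((s:ℤ) : ℤ_[p])‖ < 1 := by exact_mod_cast hc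
  rw [PadicInt.norm_int_lt_one_iff_dvd] at h2
  exact h (by exact_mod_cast h2)

lemma K0Z_mul {n : ℕ} {A B : Matrix (Fin 2) (Fin 2) ℤ_[p]}
    (hA : A ∈ K0Z p n) (hB : B ∈ K0Z p n) : A * B ∈ K0Z p n := by
  refine ⟨by rw [Matrix.det_mul]; exact hA.1.mul hB.1, ?_⟩
  have h : (A*B) 1 0 = A 1 0 * B 0 0 + A 1 1 * B 1 0 := by
    simp [Matrix.mul_apply, Fin.sum_univ_two]
  rw [h]
  exact dvd_add (hA.2.mul_right _) (hB.2.mul_left _)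

lemma isUnit_entries {n : ℕ} (hn : 1 ≤ n) {A : Matrix (Fin 2) (Fin 2) ℤ_[p]}
    (hA : A ∈ K0Z p n) : IsUnit (A 0 0) ∧ IsUnit (A 1 1) := by
  obtain ⟨hdet, hdvd⟩ := hA
  have hc : ‖A 1 0‖ < 1 := (PadicInt.norm_lt_one_iff_dvd _).2
    ((dvd_pow_self (p:ℤ_[p]) (by omega : n ≠ 0)).trans hdvd)
  rw [Matrix.det_fin_two] at hdet
  rw [← IsUnit.mul_iff]
  by_contra h
  rw [PadicInt.not_isUnit_iff] at h
  have h1 : ‖A 0 0 * A 1 1 - A 0 1 * A 1 0‖ = 1 := PadicInt.isUnit_iff.1 hdet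
  have hbc : ‖A 0 1 * A 1 0‖ < 1 := by
    rw [norm_mul]
    calc ‖A 0 1‖ * ‖A 1 0‖ ≤ 1 * ‖A 1 0‖ := by
          gcongr; exact PadicInt.norm_le_one _
    _ < 1 := by simpa using hc
  have h2 := PadicInt.nonarchimedean (A 0 0 * A 1 1) (-(A 0 1 * A 1 0))
  rw [← sub_eq_add_neg, norm_neg, h1] at h2
  exact lt_irrefl _ (h2.trans_lt (max_lt h hbc))

lemma exists_rep (m : ℕ) (hm : 1 ≤ m) (x : ℤ_[p]) (hx : IsUnit x) :
    ∃ s : ℕ, s < p ^ m ∧ ¬ p ∣ s ∧ (p:ℤ_[p])^m ∣ x - s := by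
  haveI : NeZero (p ^ m) := ⟨pow_ne_zero _ hp.out.ne_zero⟩
  have hrep : (p:ℤ_[p])^m ∣ x - ((PadicInt.toZModPow m x).val : ℤ_[p]) := by
    have h0 : PadicInt.toZModPow m (((PadicInt.toZModPow m x).val : ℕ) : ℤ_[p]) =
        PadicInt.toZModPow m x := by
      rw [map_natCast, ZMod.natCast_val, ZMod.cast_id]
    have hk : x - ((PadicInt.toZModPow m x).val : ℤ_[p]) ∈
        RingHom.ker (PadicInt.toZModPow m (p := p)) := by
      rw [RingHom.mem_ker, map_sub, h0, sub_self]
    rw [PadicInt.ker_toZModPow, Ideal.mem_span_singleton] at hk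
    exact hk
  refine ⟨(PadicInt.toZModPow m x).val, ZMod.val_lt _, ?_, hrep⟩
  intro hdvd
  have hdvd' : (p : ℤ_[p]) ∣ ((PadicInt.toZModPow m x).val : ℤ_[p]) :=
    Nat.cast_dvd_cast hdvd
  have hpx : (p : ℤ_[p]) ∣ x := by
    have h1 : (p : ℤ_[p]) ∣ x - ((PadicInt.toZModPow m x).val : ℤ_[p]) :=
      (dvd_pow_self (p:ℤ_[p]) (by omega : m ≠ 0)).trans hrep
    have := dvd_add h1 hdvd'
    simpa using this
  have hu : IsUnit (p : ℤ_[p]) := isUnit_of_dvd_unit hpx hx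
  rw [PadicInt.isUnit_iff, PadicInt.norm_p, inv_eq_one] at hu
  exact hp.out.one_lt.ne' (by exact_mod_cast hu)

lemma dy_mul (S T : ℤ_[p]) (k : Matrix (Fin 2) (Fin 2) ℤ_[p]) :
    dMat p S * yMat p T * k =
      !![S * k 0 0, S * k 0 1; T * k 0 0 + k 1 0, T * k 0 1 + k 1 1] := by
  ext i j
  fin_cases i <;> fin_cases j <;>
    simp [dMat, yMat, Matrix.mul_apply, Fin.sum_univ_two] <;> ring

lemma dy_inv (S v T : ℤ_[p]) (hv : S * v = 1) :
    dMat p S * yMat p T * !![v, 0; -(T*v), 1] = 1 := by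
  ext i j
  fin_cases i <;> fin_cases j <;>
    simp [dMat, yMat, Matrix.mul_apply, Fin.sum_univ_two, Matrix.one_apply] <;>
    linear_combination hv

lemma left_conj_entry (v T a b c d : ℤ_[p]) :
    (!![v, 0; -(T*v), 1] * !![a, b; c, d] * !![(1:ℤ_[p]),0;T,1]) 1 0
      = c + T * (d - v * a) + T * T * (-(v*b)) := by
  simp [Matrix.mul_apply, Fin.sum_univ_two]; ring

end Stmt4Aux

/-- For `n/2 ≤ r < n`, `K₀(pⁿ) y(p^r) K₀(pⁿ)` is the disjoint union over
`s ∈ ℤ_p^*/(1+p^{n-r}ℤ_p)` of the left cosets `d(s) y(p^r) K₀(pⁿ)`;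
in particular it contains exactly `p^{n-r-1}(p-1)` left cosets. -/
theorem stmt4 (p : ℕ) [Fact p.Prime] (n r : ℕ) (hn : 2 ≤ n)
    (hr1 : n ≤ 2 * r) (hr2 : r < n) :
    (dCosetZ p (K0Z p n) (yMat p ((p : ℤ_[p]) ^ r)) =
      ⋃ s ∈ unitReps p (n - r),
        lCosetZ p (K0Z p n) (dMat p (s : ℤ_[p]) * yMat p ((p : ℤ_[p]) ^ r))) ∧
    (∀ s ∈ unitReps p (n - r), ∀ t ∈ unitReps p (n - r), s ≠ t →
      Disjoint
        (lCosetZ p (K0Z p n) (dMat p (s : ℤ_[p]) * yMat p ((p : ℤ_[p]) ^ r)))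
        (lCosetZ p (K0Z p n) (dMat p (t : ℤ_[p]) * yMat p ((p : ℤ_[p]) ^ r)))) ∧
    (unitReps p (n - r)).card = p ^ (n - r - 1) * (p - 1) := by
  have hp : Fact p.Prime := inferInstance
  have hm1 : 1 ≤ n - r := by omega
  have hppow : ∀ s : ℕ, s ∈ unitReps p (n - r) → IsUnit ((s:ℕ) : ℤ_[p]) := by
    intro s hs
    rw [unitReps, Finset.mem_filter] at hs
    exact Stmt4Aux.isUnit_natCast_of_not_dvd hs.2
  refine ⟨?_, ?_, ?_⟩
  · ext w
    constructor
    · rintro ⟨k1, hk1, k2, hk2, rfl⟩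
      obtain ⟨ha, hd⟩ := Stmt4Aux.isUnit_entries (by omega) hk1
      obtain ⟨U, hU⟩ := hd
      have hu : k1 1 1 * (↑U⁻¹ : ℤ_[p]) = 1 := by rw [← hU]; exact U.mul_inv
      obtain ⟨s, hs1, hs2, hs3⟩ :=
        Stmt4Aux.exists_rep (n - r) hm1 (k1 0 0 * (↑U⁻¹ : ℤ_[p])) (ha.mul U⁻¹.isUnit)
      have hsmem : s ∈ unitReps p (n - r) :=
        Finset.mem_filter.2 ⟨Finset.mem_range.2 hs1, hs2⟩
      obtain ⟨V, hV⟩ := Stmt4Aux.isUnit_natCast_of_not_dvd (p := p) hs2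
      set t : ℤ_[p] := (p:ℤ_[p])^r with ht
      set v : ℤ_[p] := (↑V⁻¹ : ℤ_[p]) with hvdef
      have hv : (s:ℤ_[p]) * v = 1 := by rw [← hV]; exact V.mul_inv
      refine Set.mem_iUnion₂.2 ⟨s, hsmem, ?_⟩
      refine ⟨!![v,0;-(t*v),1] * k1 * yMat p t * k2, ?_, ?_⟩
      · refine Stmt4Aux.K0Z_mul ⟨?_, ?_⟩ hk2
        · rw [Matrix.det_mul, Matrix.det_mul]
          have h1 : Matrix.det !![v,(0:ℤ_[p]);-(t*v),1] = v := by
            simp [Matrix.det_fin_two_of]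
          have h2 : Matrix.det (yMat p t) = 1 := by
            simp [yMat, Matrix.det_fin_two_of]
          rw [h1, h2, mul_one]
          exact (Units.isUnit V⁻¹).mul hk1.1
        · have he : (!![v,0;-(t*v),1] * k1 * yMat p t) 1 0
              = k1 1 0 + t * (k1 1 1 - v * k1 0 0) + t * t * (-(v * k1 0 1)) := by
            conv_lhs => rw [Matrix.eta_fin_two k1]
            rw [yMat]
            exact Stmt4Aux.left_conj_entry v t _ _ _ _
          rw [he]
          refine dvd_add (dvd_add hk1.2 ?_) ?_
          · have hsplit : (p:ℤ_[p])^n = t * (p:ℤ_[p])^(n-r) := by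
              rw [ht, ← pow_add]; congr 1; omega
            rw [hsplit]
            refine mul_dvd_mul_left t ?_
            have key : k1 1 1 - v * k1 0 0 =
                (-(k1 1 1 * v)) * (k1 0 0 * (↑U⁻¹ : ℤ_[p]) - s) := by
              linear_combination (v * k1 0 0) * hu - k1 1 1 * hv
            rw [key]; exact hs3.mul_left _
          · have h2r : (p:ℤ_[p])^n ∣ t * t := by
              rw [ht, ← pow_add]
              exact pow_dvd_pow _ (by omega)
            exact h2r.mul_right _
      · have hinv : dMat p (s:ℤ_[p]) * yMat p t * !![v,0;-(t*v),1] = 1 :=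
          Stmt4Aux.dy_inv _ _ _ hv
        have hassoc : dMat p (s:ℤ_[p]) * yMat p t * (!![v,0;-(t*v),1] * k1 * yMat p t * k2)
            = (dMat p (s:ℤ_[p]) * yMat p t * !![v,0;-(t*v),1]) * (k1 * yMat p t * k2) := by
          simp only [mul_assoc]
        rw [hassoc, hinv, one_mul]
    · intro hw
      obtain ⟨s, hs, hmem⟩ := Set.mem_iUnion₂.1 hw
      obtain ⟨k, hk, rfl⟩ := hmem
      refine ⟨dMat p (s:ℤ_[p]), ⟨?_, ?_⟩, k, hk, rfl⟩
      · have : Matrix.det (dMat p (s:ℤ_[p])) = (s:ℤ_[p]) := by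
          simp [dMat, Matrix.det_fin_two_of]
        rw [this]; exact hppow s hs
      · have : dMat p (s:ℤ_[p]) 1 0 = 0 := by simp [dMat]
        rw [this]; exact dvd_zero _
  · intro s hs t ht hst
    rw [Set.disjoint_left]
    rintro w ⟨k, hk, rfl⟩ ⟨k', hk', he⟩
    rw [Stmt4Aux.dy_mul, Stmt4Aux.dy_mul] at he
    have e00 := congrFun (congrFun he 0) 0
    have e10 := congrFun (congrFun he 1) 0
    simp only [Matrix.cons_val', Matrix.cons_val_zero, Matrix.cons_val_one, Matrix.head_cons,
      Matrix.empty_val', Matrix.cons_val_fin_one, Matrix.head_fin_const, Matrix.of_apply] at e00 e10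
    have ha := (Stmt4Aux.isUnit_entries (by omega) hk).1
    have h1 : (p:ℤ_[p])^(n-r) ∣ (k 0 0 - k' 0 0) := by
      have heq : (p:ℤ_[p])^r * (k 0 0 - k' 0 0) = k' 1 0 - k 1 0 := by
        linear_combination e10
      have hd : (p:ℤ_[p])^n ∣ (p:ℤ_[p])^r * (k 0 0 - k' 0 0) := by
        rw [heq]; exact dvd_sub hk'.2 hk.2
      rw [show (p:ℤ_[p])^n = (p:ℤ_[p])^r * (p:ℤ_[p])^(n-r) by rw [← pow_add]; congr 1; omega]
        at hd
      exact (mul_dvd_mul_iff_left (pow_ne_zero r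
        (by exact_mod_cast (Fact.out : p.Prime).ne_zero : (p:ℤ_[p]) ≠ 0))).1 hd
    have h2 : (p:ℤ_[p])^(n-r) ∣ ((s:ℤ_[p]) - (t:ℤ_[p])) * k 0 0 := by
      have heq : ((s:ℤ_[p]) - (t:ℤ_[p])) * k 0 0 = (t:ℤ_[p]) * (k' 0 0 - k 0 0) := by
        linear_combination e00
      rw [heq]
      exact Dvd.dvd.mul_left (dvd_sub_comm.1 h1) _
    have hfin : (p:ℤ_[p])^(n-r) ∣ ((s:ℤ_[p]) - (t:ℤ_[p])) := (IsUnit.dvd_mul_right ha).1 h2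
    have hint : ((p:ℤ)^(n-r)) ∣ ((s:ℤ) - (t:ℤ)) := by
      rw [← PadicInt.pow_p_dvd_int_iff]
      exact_mod_cast hfin
    have hne : (s:ℤ) - (t:ℤ) ≠ 0 := by
      rw [sub_ne_zero]; exact_mod_cast hst
    have hs' := Finset.mem_range.1 (Finset.mem_filter.1 hs).1
    have ht' := Finset.mem_range.1 (Finset.mem_filter.1 ht).1
    have habs : |(s:ℤ) - (t:ℤ)| < (p:ℤ)^(n-r) := by
      rw [abs_sub_lt_iff]
      constructor <;> [skip; skip] <;>
        · have : (s:ℤ) < (p:ℤ)^(n-r) := by exact_mod_cast hs'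
          have : (t:ℤ) < (p:ℤ)^(n-r) := by exact_mod_cast ht'
          omega
    exact hne (Int.eq_zero_of_abs_lt_dvd hint habs)
  · have hcop : unitReps p (n-r) =
        (Finset.range (p^(n-r))).filter ((p^(n-r)).Coprime) := by
      rw [unitReps]
      apply Finset.filter_congr
      intro x _
      rw [Nat.coprime_pow_left_iff (by omega : 0 < n - r),
        (Fact.out : p.Prime).coprime_iff_not_dvd]
    rw [hcop, show ((Finset.range (p^(n-r))).filter ((p^(n-r)).Coprime)).card
      = Nat.totient (p^(n-r)) from rfl]
    exact Nat.totient_prime_pow (Fact.out : p.Prime) (by omega)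
end

section
/- Let p be prime, n ≥ 2, and r+1 ≤ j ≤ n-1 with r ≥ 1. In H(K // K_0(p^n)) with V_i the characteristic function of K_0(p^n) y(p^i) K_0(p^n), one has V_r * V_j = (p-1) p^{n-j-1} V_r = V_j * V_r. -/
open Matrix MeasureTheory

/-- `V_j`: the characteristic function of `K₀(pⁿ) y(p^j) K₀(pⁿ)`. -/
noncomputable def Vfun (p : ℕ) [Fact p.Prime] (n j : ℕ) :
    Matrix (Fin 2) (Fin 2) ℤ_[p] → ℂ :=
  Set.indicator (dCosetZ p (K0Z p n) !![1, 0; (p : ℤ_[p]) ^ j, 1]) (fun _ => (1 : ℂ))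

/-- `U₀`: the characteristic function of `K₀(pⁿ) w(1) K₀(pⁿ)`. -/
noncomputable def U0fun (p : ℕ) [Fact p.Prime] (n : ℕ) :
    Matrix (Fin 2) (Fin 2) ℤ_[p] → ℂ :=
  Set.indicator (dCosetZ p (K0Z p n) !![0, -1; 1, 0]) (fun _ => (1 : ℂ))

/-- The unit `1` of the Hecke algebra: the characteristic function of `K₀(pⁿ)`. -/
noncomputable def onefun (p : ℕ) [Fact p.Prime] (n : ℕ) :
    Matrix (Fin 2) (Fin 2) ℤ_[p] → ℂ :=
  Set.indicator (K0Z p n) (fun _ => (1 : ℂ))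

/-- `Y_r = 1 + Σ_{j=r}^{n-1} V_j` (so `Y_n = 1`). -/
noncomputable def Yfun (p : ℕ) [Fact p.Prime] (n r : ℕ) :
    Matrix (Fin 2) (Fin 2) ℤ_[p] → ℂ :=
  fun h => onefun p n h + ∑ j ∈ Finset.Icc r (n - 1), Vfun p n j h

/-- Convolution with respect to the measure `μ` (Haar measure of `K`,
normalized so that `μ(K₀(pⁿ)) = 1`). -/
noncomputable def convZ (p : ℕ) [Fact p.Prime]
    [MeasurableSpace (Matrix (Fin 2) (Fin 2) ℤ_[p])]
    (μ : Measure (Matrix (Fin 2) (Fin 2) ℤ_[p]))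
    (f1 f2 : Matrix (Fin 2) (Fin 2) ℤ_[p] → ℂ) :
    Matrix (Fin 2) (Fin 2) ℤ_[p] → ℂ :=
  fun h => ∫ g, f1 g * f2 (g⁻¹ * h) ∂μ

/-- Hypotheses making `μ` the normalized Haar measure of `K = GL₂(ℤ_p)`
(extended by zero to all matrices). -/
structure IsHaarK (p : ℕ) [Fact p.Prime] (n : ℕ)
    [MeasurableSpace (Matrix (Fin 2) (Fin 2) ℤ_[p])]
    (μ : Measure (Matrix (Fin 2) (Fin 2) ℤ_[p])) : Prop where
  normal : μ (K0Z p n) = 1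
  supp : μ {g : Matrix (Fin 2) (Fin 2) ℤ_[p] | ¬ IsUnit g.det} = 0
  left_inv : ∀ a : Matrix (Fin 2) (Fin 2) ℤ_[p], IsUnit a.det →
    Measure.map (fun g => a * g) μ = μ
  right_inv : ∀ a : Matrix (Fin 2) (Fin 2) ℤ_[p], IsUnit a.det →
    Measure.map (fun g => g * a) μ = μ

/-!
For `1 ≤ i < n` the double coset `K₀(pⁿ) y(pⁱ) K₀(pⁿ)` is the set `Cᵢ = valSet p i` of
`g ∈ GL₂(ℤ_p)` whose lower-left entry has valuation exactly `i`. It is the disjoint union of the `φ(p^(n-i))` left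
cosets `y(pⁱ t) K₀(pⁿ)` with `0 ≤ t < p^(n-i)` prime to `p`, so `μ(Cᵢ) = (p - 1) p^(n-i-1)`.
The lower-left entry of `x z` is `x₁₀ z₀₀ + x₁₁ z₁₀`, and in an ultrametric sum the term of
smaller valuation wins; hence `C_r C_j ⊆ C_r` and `C_j C_r ⊆ C_r` for `r < j`. Together with
`C_j⁻¹ = C_j` this makes both convolutions equal to `μ(C_j) · 1_{C_r}`.
-/

namespace PadicInt

variable {p : ℕ} [hp : Fact p.Prime]

lemma pow_dvd_iff_norm_le {x : ℤ_[p]} {m : ℕ} :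
    (p : ℤ_[p]) ^ m ∣ x ↔ ‖x‖ ≤ (p : ℝ) ^ (-(m : ℤ)) := by
  rw [norm_le_pow_iff_mem_span_pow, Ideal.mem_span_singleton]

lemma zpow_neg_lt_zpow_neg {a b : ℕ} (h : a < b) :
    (p : ℝ) ^ (-(b : ℤ)) < (p : ℝ) ^ (-(a : ℤ)) :=
  zpow_right_strictMono₀ (by exact_mod_cast hp.out.one_lt) (by omega)

lemma zpow_neg_le_one (m : ℕ) : (p : ℝ) ^ (-(m : ℤ)) ≤ 1 :=
  zpow_le_one_of_nonpos₀ (by exact_mod_cast hp.out.one_le) (by omega)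

lemma norm_add_eq_left {x y : ℤ_[p]} (h : ‖y‖ < ‖x‖) : ‖x + y‖ = ‖x‖ := by
  rw [norm_add_eq_max_of_ne h.ne', max_eq_left h.le]

lemma norm_mul_le_norm_left (x y : ℤ_[p]) : ‖x * y‖ ≤ ‖x‖ := by
  rw [norm_mul]
  exact mul_le_of_le_one_right (norm_nonneg _) (norm_le_one _)

lemma norm_eq_zpow_neg_iff {x : ℤ_[p]} {m : ℕ} :
    ‖x‖ = (p : ℝ) ^ (-(m : ℤ)) ↔ ∃ u, IsUnit u ∧ x = (p : ℤ_[p]) ^ m * u := by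
  constructor
  · intro hx
    obtain ⟨u, rfl⟩ := pow_dvd_iff_norm_le.mpr hx.le
    rw [norm_mul, norm_p_pow, mul_eq_left₀ (zpow_pos (by exact_mod_cast hp.out.pos) _).ne'] at hx
    exact ⟨u, isUnit_iff.mpr hx, rfl⟩
  · rintro ⟨u, hu, rfl⟩
    rw [norm_mul, norm_p_pow, isUnit_iff.mp hu, mul_one]

lemma eq_of_pow_dvd_natCast_sub {m s t : ℕ} (hs : s < p ^ m) (ht : t < p ^ m)
    (h : (p : ℤ_[p]) ^ m ∣ (s : ℤ_[p]) - t) : s = t := by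
  have hint : (p : ℤ_[p]) ^ m ∣ (((s : ℤ) - t : ℤ) : ℤ_[p]) := by push_cast; exact h
  rw [pow_p_dvd_int_iff] at hint
  exact ((Nat.modEq_iff_dvd.mpr (by exact_mod_cast hint)).eq_of_lt_of_lt ht hs).symm

end PadicInt

lemma Matrix.mul_apply_one_zero {R : Type*} [Semiring R] (x z : Matrix (Fin 2) (Fin 2) R) :
    (x * z) 1 0 = x 1 0 * z 0 0 + x 1 1 * z 1 0 := by
  simp [Matrix.mul_apply, Fin.sum_univ_two]

namespace K0Hecke

open PadicInt

variable {p : ℕ} [hp : Fact p.Prime]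

lemma isUnit_diag_of_norm_lt_one {g : Matrix (Fin 2) (Fin 2) ℤ_[p]} (hdet : IsUnit g.det)
    (h10 : ‖g 1 0‖ < 1) : IsUnit (g 0 0) ∧ IsUnit (g 1 1) := by
  have h : IsUnit (g 0 0 * g 1 1 + -(g 0 1 * g 1 0)) := by rwa [← sub_eq_add_neg, ← det_fin_two]
  refine IsUnit.mul_iff.mp ((IsLocalRing.isUnit_or_isUnit_of_isUnit_add h).resolve_right ?_)
  rw [IsUnit.neg_iff, not_isUnit_iff]
  exact norm_lt_one_mul h10

def valSet (p : ℕ) [Fact p.Prime] (i : ℕ) : Set (Matrix (Fin 2) (Fin 2) ℤ_[p]) :=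
  {g | IsUnit g.det ∧ ‖g 1 0‖ = (p : ℝ) ^ (-(i : ℤ))}

lemma isUnit_diag_of_mem_valSet {i : ℕ} (hi : 1 ≤ i) {g : Matrix (Fin 2) (Fin 2) ℤ_[p]}
    (hg : g ∈ valSet p i) : IsUnit (g 0 0) ∧ IsUnit (g 1 1) :=
  isUnit_diag_of_norm_lt_one hg.1
    (hg.2 ▸ zpow_lt_one_of_neg₀ (by exact_mod_cast hp.out.one_lt) (by omega))

variable {a : ℕ} {x z : Matrix (Fin 2) (Fin 2) ℤ_[p]}

lemma mul_mem_valSet_of_norm_lt_left (hx : IsUnit x.det)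
    (hx10 : ‖x 1 0‖ < (p : ℝ) ^ (-(a : ℤ))) (hz : z ∈ valSet p a) : x * z ∈ valSet p a := by
  have hx11 := (isUnit_diag_of_norm_lt_one hx (hx10.trans_le (zpow_neg_le_one a))).2
  have hmain : ‖x 1 1 * z 1 0‖ = (p : ℝ) ^ (-(a : ℤ)) := by
    rw [norm_mul, isUnit_iff.mp hx11, one_mul, hz.2]
  refine ⟨by rw [det_mul]; exact hx.mul hz.1, ?_⟩
  rw [mul_apply_one_zero, add_comm,
    norm_add_eq_left (hmain ▸ (norm_mul_le_norm_left _ _).trans_lt hx10), hmain]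

lemma mul_mem_valSet_of_norm_lt_right (hx : x ∈ valSet p a) (hz : IsUnit z.det)
    (hz10 : ‖z 1 0‖ < (p : ℝ) ^ (-(a : ℤ))) : x * z ∈ valSet p a := by
  have hz00 := (isUnit_diag_of_norm_lt_one hz (hz10.trans_le (zpow_neg_le_one a))).1
  have hmain : ‖x 1 0 * z 0 0‖ = (p : ℝ) ^ (-(a : ℤ)) := by
    rw [norm_mul, isUnit_iff.mp hz00, mul_one, hx.2]
  have hsmall : ‖x 1 1 * z 1 0‖ < ‖x 1 0 * z 0 0‖ := by
    rw [mul_comm, hmain]; exact (norm_mul_le_norm_left _ _).trans_lt hz10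
  refine ⟨by rw [det_mul]; exact hx.1.mul hz, ?_⟩
  rw [mul_apply_one_zero, norm_add_eq_left hsmall, hmain]

lemma mul_mem_valSet_of_lt_left {b : ℕ} (hab : a < b) (hx : x ∈ valSet p b)
    (hz : z ∈ valSet p a) : x * z ∈ valSet p a :=
  mul_mem_valSet_of_norm_lt_left hx.1 (hx.2 ▸ zpow_neg_lt_zpow_neg hab) hz

lemma mul_mem_valSet_of_lt_right {b : ℕ} (hab : a < b) (hx : x ∈ valSet p a)
    (hz : z ∈ valSet p b) : x * z ∈ valSet p a :=
  mul_mem_valSet_of_norm_lt_right hx hz.1 (hz.2 ▸ zpow_neg_lt_zpow_neg hab)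

lemma inv_mem_valSet (hx : x ∈ valSet p a) : x⁻¹ ∈ valSet p a := by
  refine ⟨isUnit_nonsing_inv_det x hx.1, ?_⟩
  simp [inv_def, adjugate_fin_two, isUnit_iff.mp ((isUnit_ringInverse).mpr hx.1), hx.2]

lemma norm_apply_one_zero_lt_of_mem_K0Z {j n : ℕ} (hjn : j < n) (hk : x ∈ K0Z p n) :
    ‖x 1 0‖ < (p : ℝ) ^ (-(j : ℤ)) :=
  (pow_dvd_iff_norm_le.mp hk.2).trans_lt (zpow_neg_lt_zpow_neg hjn)

lemma doubleCoset_eq_valSet {n j : ℕ} (hj : 1 ≤ j) (hjn : j < n) :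
    dCosetZ p (K0Z p n) !![1, 0; (p : ℤ_[p]) ^ j, 1] = valSet p j := by
  ext g
  constructor
  · rintro ⟨k₁, hk₁, k₂, hk₂, rfl⟩
    have hy : !![1, 0; (p : ℤ_[p]) ^ j, 1] ∈ valSet p j := by
      simp [valSet, det_fin_two_of]
    exact mul_mem_valSet_of_norm_lt_right
      (mul_mem_valSet_of_norm_lt_left hk₁.1 (norm_apply_one_zero_lt_of_mem_K0Z hjn hk₁) hy)
      hk₂.1 (norm_apply_one_zero_lt_of_mem_K0Z hjn hk₂)
  · intro hg
    obtain ⟨a, ha⟩ := (isUnit_diag_of_mem_valSet hj hg).1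
    obtain ⟨_, ⟨u, rfl⟩, hg10⟩ := norm_eq_zpow_neg_iff.mp hg.2
    -- `k₁ = diag(1, v)` with `v = g₁₀ / (p^j g₀₀)`; then `(k₁ y(p^j))⁻¹ g` is upper triangular.
    set v := u * a⁻¹
    have hva : (v : ℤ_[p]) * a = u := by simp [v]
    have hvu : ((v⁻¹ : ℤ_[p]ˣ) : ℤ_[p]) * u = a := by simp [v, mul_assoc]
    refine ⟨!![1, 0; 0, (v : ℤ_[p])], ⟨by simp [det_fin_two_of], by simp⟩,
      !![g 0 0, g 0 1; 0, (v⁻¹ : ℤ_[p]ˣ) * g 1 1 - (p : ℤ_[p]) ^ j * g 0 1], ⟨?_, by simp⟩, ?_⟩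
    · have hdet : (!![g 0 0, g 0 1; 0, (v⁻¹ : ℤ_[p]ˣ) * g 1 1 - (p : ℤ_[p]) ^ j * g 0 1]).det =
          (v⁻¹ : ℤ_[p]ˣ) * g.det := by
        rw [det_fin_two_of, det_fin_two, hg10, ← ha]
        linear_combination (p : ℤ_[p]) ^ j * g 0 1 * hvu
      rw [hdet]
      exact (Units.isUnit _).mul hg.1
    · ext i k
      fin_cases i <;> fin_cases k <;> simp [Matrix.mul_apply, Fin.sum_univ_two]
      · rw [hg10, ← ha]; linear_combination -(p : ℤ_[p]) ^ j * hva
      · linear_combination -g 1 1 * (Units.mul_inv v)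

/-- The left coset `y(t) K₀(pⁿ)`, written as the preimage of `K₀(pⁿ)` under `y(t)⁻¹ = y(-t)`. -/
def yCoset (p : ℕ) [Fact p.Prime] (n : ℕ) (t : ℤ_[p]) : Set (Matrix (Fin 2) (Fin 2) ℤ_[p]) :=
  (fun x => !![1, 0; -t, 1] * x) ⁻¹' K0Z p n

lemma mem_yCoset {n : ℕ} {t : ℤ_[p]} :
    x ∈ yCoset p n t ↔ IsUnit x.det ∧ (p : ℤ_[p]) ^ n ∣ x 1 0 - t * x 0 0 := by
  change IsUnit (!![1, 0; -t, 1] * x).det ∧ (p : ℤ_[p]) ^ n ∣ (!![1, 0; -t, 1] * x) 1 0 ↔ _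
  rw [det_mul, mul_apply_one_zero]
  simp [det_fin_two_of, sub_eq_add_neg, add_comm]

lemma isUnit_apply_zero_zero_of_mem_yCoset {n : ℕ} (hn : 1 ≤ n) {t : ℤ_[p]}
    (ht : (p : ℤ_[p]) ∣ t) (hx : x ∈ yCoset p n t) : IsUnit (x 0 0) := by
  obtain ⟨hdet, hdvd⟩ := mem_yCoset.mp hx
  have h10 : (p : ℤ_[p]) ∣ x 1 0 := by
    simpa using dvd_add ((dvd_pow_self _ (by omega)).trans hdvd) (ht.mul_right (x 0 0))
  exact (isUnit_diag_of_norm_lt_one hdet ((norm_lt_one_iff_dvd _).mpr h10)).1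

variable {n j : ℕ}

lemma exists_mem_yCoset_of_mem_valSet (hj : 1 ≤ j) (hjn : j < n) (hg : x ∈ valSet p j) :
    ∃ t < p ^ (n - j), ¬ p ∣ t ∧ x ∈ yCoset p n ((p : ℤ_[p]) ^ j * t) := by
  obtain ⟨a, ha⟩ := (isUnit_diag_of_mem_valSet hj hg).1
  obtain ⟨u, hu, hx10⟩ := norm_eq_zpow_neg_iff.mp hg.2
  -- `t` is the residue of `x₁₀ / (pʲ x₀₀) = u a⁻¹` modulo `p^(n-j)`
  have hv : IsUnit (u * a⁻¹) := hu.mul (Units.isUnit _)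
  have happr : (p : ℤ_[p]) ^ (n - j) ∣ u * a⁻¹ - (u * a⁻¹).appr (n - j) :=
    Ideal.mem_span_singleton.mp (appr_spec _ _)
  refine ⟨(u * a⁻¹).appr (n - j), appr_lt _ _, fun hpt => ?_, mem_yCoset.mpr ⟨hg.1, ?_⟩⟩
  · refine (isUnit_iff.mp hv).not_lt ((norm_lt_one_iff_dvd _).mpr ?_)
    simpa using dvd_add ((dvd_pow_self _ (by omega)).trans happr)
      (Nat.cast_dvd_cast hpt : (p : ℤ_[p]) ∣ _)
  · have hkey : x 1 0 - (p : ℤ_[p]) ^ j * ((u * a⁻¹).appr (n - j) : ℕ) * x 0 0 =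
        (p : ℤ_[p]) ^ j * ((u * a⁻¹ - (u * a⁻¹).appr (n - j)) * a) := by
      rw [hx10, ← ha]; linear_combination -(p : ℤ_[p]) ^ j * u * a.mul_inv
    rw [hkey, ← pow_mul_pow_sub _ hjn.le]
    exact mul_dvd_mul_left _ (happr.mul_right _)

lemma mem_valSet_of_mem_yCoset (hj : 1 ≤ j) (hjn : j < n) {t : ℕ} (hpt : ¬ p ∣ t)
    (hx : x ∈ yCoset p n ((p : ℤ_[p]) ^ j * t)) : x ∈ valSet p j := by
  have hx00 := isUnit_apply_zero_zero_of_mem_yCoset (hj.trans hjn.le)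
    ((dvd_pow_self _ (by omega)).mul_right _) hx
  have ht : IsUnit (t : ℤ_[p]) :=
    isUnit_iff.mpr (norm_natCast_eq_one_iff.mpr (hp.out.coprime_iff_not_dvd.mpr hpt))
  obtain ⟨hdet, hdvd⟩ := mem_yCoset.mp hx
  have hmain : ‖(p : ℤ_[p]) ^ j * t * x 0 0‖ = (p : ℝ) ^ (-(j : ℤ)) :=
    norm_eq_zpow_neg_iff.mpr ⟨t * x 0 0, ht.mul hx00, by ring⟩
  have hsmall : ‖x 1 0 - (p : ℤ_[p]) ^ j * t * x 0 0‖ < ‖(p : ℤ_[p]) ^ j * t * x 0 0‖ :=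
    hmain ▸ (pow_dvd_iff_norm_le.mp hdvd).trans_lt (zpow_neg_lt_zpow_neg hjn)
  refine ⟨hdet, ?_⟩
  rw [← add_sub_cancel ((p : ℤ_[p]) ^ j * t * x 0 0) (x 1 0), norm_add_eq_left hsmall, hmain]

lemma valSet_eq_biUnion_yCoset (hj : 1 ≤ j) (hjn : j < n) :
    valSet p j = ⋃ t ∈ (Finset.range (p ^ (n - j))).filter (¬ p ∣ ·),
      yCoset p n ((p : ℤ_[p]) ^ j * t) := by
  ext g
  simp only [Set.mem_iUnion, Finset.mem_filter, Finset.mem_range, exists_prop, and_assoc]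
  exact ⟨exists_mem_yCoset_of_mem_valSet hj hjn,
    fun ⟨_, _, hpt, hg⟩ => mem_valSet_of_mem_yCoset hj hjn hpt hg⟩

lemma disjoint_yCoset (hj : 1 ≤ j) (hjn : j < n) {s t : ℕ} (hs : s < p ^ (n - j))
    (ht : t < p ^ (n - j)) (hst : s ≠ t) :
    Disjoint (yCoset p n ((p : ℤ_[p]) ^ j * s)) (yCoset p n ((p : ℤ_[p]) ^ j * t)) := by
  refine Set.disjoint_left.mpr fun x hxs hxt => hst (eq_of_pow_dvd_natCast_sub hs ht ?_)
  have hx00 := isUnit_apply_zero_zero_of_mem_yCoset (hj.trans hjn.le)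
    ((dvd_pow_self _ (by omega)).mul_right _) hxs
  have hdiff := dvd_sub (mem_yCoset.mp hxt).2 (mem_yCoset.mp hxs).2
  rw [show x 1 0 - (p : ℤ_[p]) ^ j * t * x 0 0 - (x 1 0 - (p : ℤ_[p]) ^ j * s * x 0 0) =
      (p : ℤ_[p]) ^ j * (s - t) * x 0 0 by ring, hx00.dvd_mul_right,
    ← pow_mul_pow_sub _ hjn.le] at hdiff
  exact (mul_dvd_mul_iff_left (pow_ne_zero _ (Nat.cast_ne_zero.mpr hp.out.ne_zero))).mp hdiff

lemma isClosed_setOf_isUnit_det : IsClosed {g : Matrix (Fin 2) (Fin 2) ℤ_[p] | IsUnit g.det} := by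
  simp only [isUnit_iff]
  exact isClosed_eq (by fun_prop) continuous_const

section Measure

variable [MeasurableSpace (Matrix (Fin 2) (Fin 2) ℤ_[p])]
  {μ : Measure (Matrix (Fin 2) (Fin 2) ℤ_[p])} {A B : Set (Matrix (Fin 2) (Fin 2) ℤ_[p])}

lemma convZ_indicator_of_mul_mem_left (hB : ∀ b ∈ B, IsUnit b.det)
    (hBA : ∀ b ∈ B, ∀ a ∈ A, b * a ∈ A) (hBinv : ∀ b ∈ B, b⁻¹ ∈ B) (hBm : MeasurableSet B)
    (h : Matrix (Fin 2) (Fin 2) ℤ_[p]) :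
    convZ p μ (B.indicator fun _ => 1) (A.indicator fun _ => 1) h =
      μ.real B * A.indicator (fun _ => 1) h := by
  have hmem : ∀ g ∈ B, g⁻¹ * h ∈ A ↔ h ∈ A := fun g hg =>
    ⟨fun hgh => by simpa [mul_nonsing_inv_cancel_left _ _ (hB g hg)] using hBA g hg _ hgh,
      fun hh => hBA _ (hBinv g hg) h hh⟩
  have hpt : ∀ g, B.indicator (fun _ => (1 : ℂ)) g * A.indicator (fun _ => 1) (g⁻¹ * h) =
      A.indicator (fun _ => 1) h * B.indicator (fun _ => 1) g := fun g => by
    by_cases hg : g ∈ B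
    · rw [Set.indicator_of_mem hg, one_mul, mul_one]
      exact Set.indicator_const_eq_indicator_const (hmem g hg)
    · simp [Set.indicator_of_notMem hg]
  simp only [convZ, hpt, integral_const_mul, integral_indicator_const _ hBm]
  simp [mul_comm]

variable [BorelSpace (Matrix (Fin 2) (Fin 2) ℤ_[p])]

lemma measurableSet_K0Z : MeasurableSet (K0Z p n) := by
  simp only [K0Z, pow_dvd_iff_norm_le, Set.ofPred_and]
  exact (isClosed_setOf_isUnit_det.inter (isClosed_le (by fun_prop) continuous_const)).measurableSet

lemma measurableSet_valSet : MeasurableSet (valSet p j) := by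
  simp only [valSet, Set.ofPred_and]
  exact (isClosed_setOf_isUnit_det.inter (isClosed_eq (by fun_prop) continuous_const)).measurableSet

lemma measure_yCoset
    (hμ : ∀ a : Matrix (Fin 2) (Fin 2) ℤ_[p], IsUnit a.det → μ.map (fun g => a * g) = μ)
    (t : ℤ_[p]) : μ (yCoset p n t) = μ (K0Z p n) := by
  conv_rhs => rw [← hμ !![1, 0; -t, 1] (by simp [det_fin_two_of])]
  exact (Measure.map_apply (by fun_prop) measurableSet_K0Z).symm

lemma measure_valSet (hj : 1 ≤ j) (hjn : j < n)
    (hμ : ∀ a : Matrix (Fin 2) (Fin 2) ℤ_[p], IsUnit a.det → μ.map (fun g => a * g) = μ) :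
    μ (valSet p j) = (p ^ (n - j)).totient * μ (K0Z p n) := by
  rw [valSet_eq_biUnion_yCoset hj hjn, measure_biUnion_finset
    (fun s hs t ht hst => disjoint_yCoset hj hjn (Finset.mem_range.mp (Finset.mem_filter.mp hs).1)
      (Finset.mem_range.mp (Finset.mem_filter.mp ht).1) hst)
    (fun _ _ => measurableSet_K0Z.preimage (by fun_prop)),
    Finset.sum_congr rfl fun t _ => measure_yCoset hμ _, Finset.sum_const, nsmul_eq_mul,
    Nat.totient_eq_card_coprime]
  congr 3
  refine Finset.filter_congr fun t _ => ?_
  rw [Nat.coprime_pow_left_iff (by omega), hp.out.coprime_iff_not_dvd]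

lemma integral_indicator_one_mul_left (hB : MeasurableSet B) {a : Matrix (Fin 2) (Fin 2) ℤ_[p]}
    (hμ : μ.map (fun g => a * g) = μ) :
    ∫ g, B.indicator (fun _ => (1 : ℂ)) (a * g) ∂μ = μ.real B := by
  rw [← integral_map (f := B.indicator fun _ => (1 : ℂ)) (by fun_prop)
    ((stronglyMeasurable_const.indicator hB).aestronglyMeasurable), hμ,
    integral_indicator_const _ hB]
  simp

lemma convZ_indicator_of_mul_mem_right (hA : ∀ a ∈ A, IsUnit a.det)
    (hAB : ∀ a ∈ A, ∀ b ∈ B, a * b ∈ A) (hBinv : ∀ b ∈ B, b⁻¹ ∈ B) (hBm : MeasurableSet B)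
    (hμ : ∀ a : Matrix (Fin 2) (Fin 2) ℤ_[p], IsUnit a.det → μ.map (fun g => a * g) = μ)
    (h : Matrix (Fin 2) (Fin 2) ℤ_[p]) :
    convZ p μ (A.indicator fun _ => 1) (B.indicator fun _ => 1) h =
      μ.real B * A.indicator (fun _ => 1) h := by
  by_cases hh : h ∈ A
  · have hmem : ∀ g, g ∈ A ∧ g⁻¹ * h ∈ B ↔ h⁻¹ * g ∈ B := fun g => by
      refine ⟨fun ⟨hg, hgh⟩ => ?_, fun hhg => ⟨?_, ?_⟩⟩
      · simpa only [Matrix.mul_inv_rev, nonsing_inv_nonsing_inv _ (hA g hg)] using hBinv _ hgh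
      · simpa [mul_nonsing_inv_cancel_left _ _ (hA h hh)] using hAB h hh _ hhg
      · simpa only [Matrix.mul_inv_rev, nonsing_inv_nonsing_inv _ (hA h hh)] using hBinv _ hhg
    have hpt : ∀ g, A.indicator (fun _ => (1 : ℂ)) g * B.indicator (fun _ => 1) (g⁻¹ * h) =
        B.indicator (fun _ => 1) (h⁻¹ * g) := fun g => by
      by_cases hg : g ∈ A
      · rw [Set.indicator_of_mem hg, one_mul]
        exact Set.indicator_const_eq_indicator_const ((and_iff_right hg).symm.trans (hmem g))
      · rw [Set.indicator_of_notMem hg, zero_mul,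
          Set.indicator_of_notMem fun hhg => hg ((hmem g).mpr hhg).1]
    calc convZ p μ _ _ h = ∫ g, B.indicator (fun _ => (1 : ℂ)) (h⁻¹ * g) ∂μ :=
          integral_congr_ae (.of_forall hpt)
      _ = μ.real B :=
          integral_indicator_one_mul_left hBm (hμ _ (isUnit_nonsing_inv_det _ (hA h hh)))
      _ = _ := by rw [Set.indicator_of_mem hh, mul_one]
  · have hpt : ∀ g, A.indicator (fun _ => (1 : ℂ)) g * B.indicator (fun _ => 1) (g⁻¹ * h) = 0 :=
      fun g => by
        by_cases hg : g ∈ A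
        · refine mul_eq_zero_of_right _ (Set.indicator_of_notMem (fun hgh => hh ?_) _)
          simpa [mul_nonsing_inv_cancel_left _ _ (hA g hg)] using hAB g hg _ hgh
        · exact mul_eq_zero_of_left (Set.indicator_of_notMem hg _) _
    calc convZ p μ _ _ h = ∫ _, (0 : ℂ) ∂μ := integral_congr_ae (.of_forall hpt)
      _ = _ := by rw [integral_zero, Set.indicator_of_notMem hh, mul_zero]

end Measure

end K0Hecke

theorem stmt7_general (p : ℕ) [Fact p.Prime] (n r j : ℕ)
    (hr : 1 ≤ r) (hj1 : r + 1 ≤ j) (hj2 : j ≤ n - 1)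
    [mM : MeasurableSpace (Matrix (Fin 2) (Fin 2) ℤ_[p])]
    (hB : mM = borel (Matrix (Fin 2) (Fin 2) ℤ_[p]))
    (μ : Measure (Matrix (Fin 2) (Fin 2) ℤ_[p])) (hμ : IsHaarK p n μ) :
    ∀ h, convZ p μ (Vfun p n r) (Vfun p n j) h =
        ((p : ℂ) - 1) * (p : ℂ) ^ (n - j - 1) * Vfun p n r h ∧
      convZ p μ (Vfun p n j) (Vfun p n r) h =
        ((p : ℂ) - 1) * (p : ℂ) ^ (n - j - 1) * Vfun p n r h := by
  open K0Hecke in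
  have : BorelSpace (Matrix (Fin 2) (Fin 2) ℤ_[p]) := ⟨hB⟩
  have hrj : r < j := by omega
  have hjn : j < n := by omega
  have hVr : Vfun p n r = (valSet p r).indicator fun _ => 1 := by
    rw [Vfun, doubleCoset_eq_valSet hr (by omega)]
  have hVj : Vfun p n j = (valSet p j).indicator fun _ => 1 := by
    rw [Vfun, doubleCoset_eq_valSet (by omega) hjn]
  have hmeas : μ.real (valSet p j) = ((p : ℂ) - 1) * (p : ℂ) ^ (n - j - 1) := by
    have hp : p.Prime := Fact.out
    rw [measureReal_def, measure_valSet (by omega) hjn hμ.left_inv, hμ.normal, mul_one,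
      Nat.totient_prime_pow hp (by omega), ENNReal.toReal_natCast]
    push_cast [Nat.cast_sub hp.one_le]
    ring
  intro h
  rw [hVr, hVj, ← hmeas]
  exact ⟨convZ_indicator_of_mul_mem_right (fun _ hg => hg.1)
      (fun _ ha _ hb => mul_mem_valSet_of_lt_right hrj ha hb) (fun _ => inv_mem_valSet)
      measurableSet_valSet hμ.left_inv h,
    convZ_indicator_of_mul_mem_left (fun _ hg => hg.1)
      (fun _ hb _ ha => mul_mem_valSet_of_lt_left hrj hb ha) (fun _ => inv_mem_valSet)
      measurableSet_valSet h⟩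

/-- `V_r * V_j = (p-1) p^{n-j-1} V_r = V_j * V_r` for `1 ≤ r`, `r+1 ≤ j ≤ n-1`. -/
theorem stmt7 (p : ℕ) [Fact p.Prime] (n r j : ℕ) (hn : 2 ≤ n)
    (hr : 1 ≤ r) (hj1 : r + 1 ≤ j) (hj2 : j ≤ n - 1)
    [mM : MeasurableSpace (Matrix (Fin 2) (Fin 2) ℤ_[p])]
    (hB : mM = borel (Matrix (Fin 2) (Fin 2) ℤ_[p]))
    (μ : Measure (Matrix (Fin 2) (Fin 2) ℤ_[p])) (hμ : IsHaarK p n μ) :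
    ∀ h, convZ p μ (Vfun p n r) (Vfun p n j) h =
        ((p : ℂ) - 1) * (p : ℂ) ^ (n - j - 1) * Vfun p n r h ∧
      convZ p μ (Vfun p n j) (Vfun p n r) h =
        ((p : ℂ) - 1) * (p : ℂ) ^ (n - j - 1) * Vfun p n r h :=
  stmt7_general p n r j hr hj1 hj2 (mM := mM) hB μ hμ
end

section
/- Let p be prime and n ≥ 2. In H(K // K_0(p^n)) define Y_r = 1 + Σ_{j=r}^{n-1} V_j for 1 ≤ r ≤ n-1 and Y_n = 1, where V_j is the characteristic function of K_0(p^n) y(p^j) K_0(p^n). Then Y_{n-r} * Y_{n-r} = p^r Y_{n-r} for all 0 ≤ r ≤ n-1, and Y_r * Y_l = p^{n-r} Y_l = Y_l * Y_r whenever r ≥ l. -/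
/-
The double coset `K₀(pⁿ) y(pʲ) K₀(pⁿ)`, `1 ≤ j < n`, consists of the matrices of `K₀(pʲ)` whose
lower left entry has valuation exactly `j`; hence for `1 ≤ r ≤ n`, `Y_r` is the characteristic
function of the group `K₀(pʳ)`. The translates `y(t pʳ) K₀(pⁿ)`, `0 ≤ t < p^(n-r)`, partition
`K₀(pʳ)`, so `μ(K₀(pʳ)) = p^(n-r)`. Finally, for groups `H ⊆ G` of invertible matrices and a
measure invariant under left translation by `G`, both `1_H * 1_G` and `1_G * 1_H` equal `μ(H) 1_G`.
-/

open Matrix MeasureTheory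

namespace Matrix

section Fin2

variable {R : Type*} [CommRing R]

lemma mul_lowerUnitriangular_mul_apply_one_zero (a b : Matrix (Fin 2) (Fin 2) R) (c : R) :
    (a * !![1, 0; c, 1] * b) 1 0 = c * (a 1 1 * b 0 0) + (a * b) 1 0 := by
  simp [mul_apply, Fin.sum_univ_two]
  ring

lemma lowerUnitriangular_mul_apply_one_zero (g : Matrix (Fin 2) (Fin 2) R) (c : R) :
    (!![1, 0; c, 1] * g) 1 0 = c * g 0 0 + g 1 0 := by
  simp [mul_apply, Fin.sum_univ_two]

lemma det_lowerUnitriangular (c : R) :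
    (!![1, 0; c, 1] : Matrix (Fin 2) (Fin 2) R).det = 1 := by
  simp [det_fin_two_of]

end Fin2

variable {ι R : Type*} [Fintype ι] [DecidableEq ι] [CommRing R]

structure IsGLSubgroup (G : Set (Matrix ι ι R)) : Prop where
  isUnit_det : ∀ g ∈ G, IsUnit g.det
  mul_mem : ∀ g ∈ G, ∀ h ∈ G, g * h ∈ G
  inv_mem : ∀ g ∈ G, g⁻¹ ∈ G

lemma inv_inv_mul {a : Matrix ι ι R} (ha : IsUnit a.det) (b : Matrix ι ι R) :
    (a⁻¹ * b)⁻¹ = b⁻¹ * a := by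
  rw [mul_inv_rev, nonsing_inv_nonsing_inv a ha]

namespace IsGLSubgroup

variable {G H : Set (Matrix ι ι R)}

lemma inv_mul_mem_iff (hG : IsGLSubgroup G) {g : Matrix ι ι R} (hg : g ∈ G) (h : Matrix ι ι R) :
    g⁻¹ * h ∈ G ↔ h ∈ G := by
  refine ⟨fun hgh => ?_, fun hh => hG.mul_mem _ (hG.inv_mem g hg) _ hh⟩
  simpa [← mul_assoc, mul_nonsing_inv g (hG.isUnit_det g hg)] using hG.mul_mem g hg _ hgh

lemma mem_and_inv_mul_mem_iff (hG : IsGLSubgroup G) (hH : IsGLSubgroup H) (hHG : H ⊆ G)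
    {h : Matrix ι ι R} (hh : h ∈ G) (g : Matrix ι ι R) :
    g ∈ G ∧ g⁻¹ * h ∈ H ↔ h⁻¹ * g ∈ H := by
  constructor
  · rintro ⟨hg, hgh⟩
    simpa [inv_inv_mul (hG.isUnit_det g hg)] using hH.inv_mem _ hgh
  · intro hhg
    have hg : g ∈ G := (hG.inv_mul_mem_iff hh g).mp (hHG hhg)
    exact ⟨hg, by simpa [inv_inv_mul (hG.isUnit_det h hh)] using hH.inv_mem _ hhg⟩

variable [MeasurableSpace (Matrix ι ι R)] {μ : Measure (Matrix ι ι R)}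

lemma integral_indicator_mul_indicator_inv_mul_of_subset_left (hG : IsGLSubgroup G)
    (hHG : H ⊆ G) (hHm : MeasurableSet H) (h : Matrix ι ι R) :
    ∫ g, H.indicator (fun _ => (1 : ℂ)) g * G.indicator (fun _ => 1) (g⁻¹ * h) ∂μ =
      μ.real H * G.indicator (fun _ => 1) h := by
  classical
  have hint : ∀ g, H.indicator (fun _ => (1 : ℂ)) g * G.indicator (fun _ => 1) (g⁻¹ * h) =
      H.indicator (fun _ => G.indicator (fun _ => 1) h) g := by
    intro g
    by_cases hg : g ∈ H
    · simp only [Set.indicator_of_mem hg, one_mul, Set.indicator_apply, hG.inv_mul_mem_iff (hHG hg)]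
    · simp [hg]
  simp_rw [hint, integral_indicator_const _ hHm, Complex.real_smul]

lemma integral_indicator_mul_indicator_inv_mul_of_subset_right [MeasurableMul (Matrix ι ι R)]
    (hμ : ∀ a ∈ G, μ.map (a * ·) = μ) (hG : IsGLSubgroup G) (hH : IsGLSubgroup H) (hHG : H ⊆ G)
    (hHm : MeasurableSet H) (h : Matrix ι ι R) :
    ∫ g, G.indicator (fun _ => (1 : ℂ)) g * H.indicator (fun _ => 1) (g⁻¹ * h) ∂μ =
      μ.real H * G.indicator (fun _ => 1) h := by
  classical
  by_cases hh : h ∈ G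
  · have hint : ∀ g, G.indicator (fun _ => (1 : ℂ)) g * H.indicator (fun _ => 1) (g⁻¹ * h) =
        ((h⁻¹ * ·) ⁻¹' H).indicator (fun _ => 1) g := by
      intro g
      rw [Set.indicator_apply (s := (h⁻¹ * ·) ⁻¹' H), Set.mem_preimage,
        ← hG.mem_and_inv_mul_mem_iff hH hHG hh g]
      by_cases hg : g ∈ G <;> by_cases hgh : g⁻¹ * h ∈ H <;> simp [hg, hgh]
    have hinv : μ ((h⁻¹ * ·) ⁻¹' H) = μ H := by
      rw [← Measure.map_apply (measurable_const_mul _) hHm, hμ _ (hG.inv_mem h hh)]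
    simp_rw [hint, integral_indicator_const _ (measurable_const_mul _ hHm), measureReal_def, hinv,
      Set.indicator_of_mem hh, Complex.real_smul]
  · have hint : ∀ g, G.indicator (fun _ => (1 : ℂ)) g * H.indicator (fun _ => 1) (g⁻¹ * h) = 0 := by
      intro g
      by_cases hg : g ∈ G
      · have : g⁻¹ * h ∉ H := fun hgh => hh ((hG.inv_mul_mem_iff hg h).mp (hHG hgh))
        simp [this]
      · simp [hg]
    simp [hint, hh]

end IsGLSubgroup

end Matrix

lemma PadicInt.isUnit_iff_not_dvd {p : ℕ} [Fact p.Prime] (x : ℤ_[p]) :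
    IsUnit x ↔ ¬ (p : ℤ_[p]) ∣ x :=
  (PadicInt.not_isUnit_iff.trans (PadicInt.norm_lt_one_iff_dvd x)).not_right

section K0Z

variable {p : ℕ} [Fact p.Prime]

lemma K0Z_antitone : Antitone (K0Z p) :=
  fun _ _ hmk _ hg => ⟨hg.1, (pow_dvd_pow _ hmk).trans hg.2⟩

lemma isGLSubgroup_K0Z (m : ℕ) : IsGLSubgroup (K0Z p m) where
  isUnit_det _ hg := hg.1
  mul_mem g hg h hh := by
    refine ⟨by simpa using hg.1.mul hh.1, ?_⟩
    rw [Matrix.mul_apply, Fin.sum_univ_two]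
    exact dvd_add (hg.2.mul_right _) (hh.2.mul_left _)
  inv_mem g hg := by
    refine ⟨(Matrix.isUnit_nonsing_inv_det_iff).mpr hg.1, ?_⟩
    rw [Matrix.inv_def, Matrix.adjugate_fin_two]
    simpa using (hg.2.neg_right).mul_left _

lemma isUnit_diag_of_mem_K0Z {m : ℕ} (hm : 1 ≤ m) {g : Matrix (Fin 2) (Fin 2) ℤ_[p]}
    (hg : g ∈ K0Z p m) : IsUnit (g 0 0) ∧ IsUnit (g 1 1) := by
  have hc : (p : ℤ_[p]) ∣ g 1 0 := (dvd_pow_self _ (by omega)).trans hg.2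
  have hdet := (PadicInt.isUnit_iff_not_dvd _).mp hg.1
  rw [Matrix.det_fin_two] at hdet
  simp only [PadicInt.isUnit_iff_not_dvd]
  exact ⟨fun ha => hdet (dvd_sub (ha.mul_right _) (hc.mul_left _)),
    fun hd => hdet (dvd_sub (hd.mul_left _) (hc.mul_left _))⟩

lemma measurableSet_K0Z [MeasurableSpace (Matrix (Fin 2) (Fin 2) ℤ_[p])]
    [BorelSpace (Matrix (Fin 2) (Fin 2) ℤ_[p])] (m : ℕ) : MeasurableSet (K0Z p m) := by
  have hK : K0Z p m = {g | ‖g.det‖ = 1} ∩ {g | ‖g 1 0‖ ≤ (p : ℝ) ^ (-(m : ℤ))} := by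
    ext g
    simp only [K0Z, PadicInt.isUnit_iff, PadicInt.norm_le_pow_iff_mem_span_pow,
      Ideal.mem_span_singleton, Set.mem_ofPred_eq, Set.mem_inter_iff]
  rw [hK]
  refine (isClosed_eq ?_ continuous_const).measurableSet.inter
    (isClosed_le ?_ continuous_const).measurableSet <;> fun_prop

end K0Z

section DoubleCoset

variable {p : ℕ} [Fact p.Prime]

lemma pow_dvd_and_not_pow_succ_dvd_pow_mul_add {j : ℕ} {u z : ℤ_[p]} (hu : IsUnit u)
    (hz : (p : ℤ_[p]) ^ (j + 1) ∣ z) :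
    (p : ℤ_[p]) ^ j ∣ p ^ j * u + z ∧ ¬ (p : ℤ_[p]) ^ (j + 1) ∣ p ^ j * u + z := by
  refine ⟨dvd_add (dvd_mul_right _ _) ((pow_dvd_pow _ j.le_succ).trans hz), fun h => ?_⟩
  have hp : (p : ℤ_[p]) ^ j ≠ 0 := pow_ne_zero _ PadicInt.prime_p.ne_zero
  have hpu : (p : ℤ_[p]) ^ j * p ∣ p ^ j * u := by
    simpa [pow_succ] using dvd_sub h hz
  exact (PadicInt.isUnit_iff_not_dvd u).mp hu ((mul_dvd_mul_iff_left hp).mp hpu)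

lemma mem_dCosetZ_K0Z_iff {n j : ℕ} (hj : 1 ≤ j) (hjn : j < n) (h : Matrix (Fin 2) (Fin 2) ℤ_[p]) :
    h ∈ dCosetZ p (K0Z p n) !![1, 0; (p : ℤ_[p]) ^ j, 1] ↔
      IsUnit h.det ∧ (p : ℤ_[p]) ^ j ∣ h 1 0 ∧ ¬ (p : ℤ_[p]) ^ (j + 1) ∣ h 1 0 := by
  constructor
  · rintro ⟨k₁, hk₁, k₂, hk₂, rfl⟩
    refine ⟨by simpa [Matrix.det_lowerUnitriangular] using hk₁.1.mul hk₂.1, ?_⟩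
    rw [Matrix.mul_lowerUnitriangular_mul_apply_one_zero]
    exact pow_dvd_and_not_pow_succ_dvd_pow_mul_add
      ((isUnit_diag_of_mem_K0Z (by omega) hk₁).2.mul (isUnit_diag_of_mem_K0Z (by omega) hk₂).1)
      ((pow_dvd_pow _ hjn).trans ((isGLSubgroup_K0Z n).mul_mem _ hk₁ _ hk₂).2)
  · rintro ⟨hdet, ⟨e, hc⟩, hexact⟩
    have ha : IsUnit (h 0 0) := (isUnit_diag_of_mem_K0Z hj ⟨hdet, e, hc⟩).1
    have he : IsUnit e := by
      refine (PadicInt.isUnit_iff_not_dvd e).mpr fun ⟨f, hf⟩ => hexact ⟨f, ?_⟩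
      rw [hc, hf, pow_succ, mul_assoc]
    obtain ⟨a', ha'⟩ := ha.exists_right_inv
    obtain ⟨e', he'⟩ := he.exists_right_inv
    have hδ : h 1 1 - h 1 0 * a' * h 0 1 = a' * h.det := by
      rw [Matrix.det_fin_two]
      linear_combination (-h 1 1) * ha'
    refine ⟨!![h 0 0, 0; 0, e], ⟨?_, by simp⟩,
      !![1, a' * h 0 1; 0, e' * (h 1 1 - h 1 0 * a' * h 0 1)], ⟨?_, by simp⟩, ?_⟩
    · simpa [Matrix.det_fin_two_of] using ha.mul he
    · rw [Matrix.det_fin_two_of, hδ, one_mul, mul_zero, sub_zero]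
      exact (IsUnit.of_mul_eq_one_right e he').mul ((IsUnit.of_mul_eq_one_right _ ha').mul hdet)
    · ext i k
      fin_cases i <;> fin_cases k <;> simp [Matrix.mul_apply, Fin.sum_univ_two]
      · linear_combination (-h 0 1) * ha'
      · linear_combination hc
      · linear_combination (a' * h 0 1) * hc - (h 1 1 - h 1 0 * a' * h 0 1) * he'

end DoubleCoset

section HeckeY

variable {p : ℕ} [Fact p.Prime]

lemma indicator_K0Z_eq_add_Vfun {n j : ℕ} (hj : 1 ≤ j) (hjn : j < n) :
    (K0Z p j).indicator (fun _ => (1 : ℂ)) =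
      fun h => (K0Z p (j + 1)).indicator (fun _ => 1) h + Vfun p n j h := by
  have hunion : K0Z p j = K0Z p (j + 1) ∪ dCosetZ p (K0Z p n) !![1, 0; (p : ℤ_[p]) ^ j, 1] := by
    ext h
    rw [Set.mem_union, mem_dCosetZ_K0Z_iff hj hjn]
    refine ⟨fun hK => (em _).imp (fun hs => ⟨hK.1, hs⟩) (fun hs => ⟨hK.1, hK.2, hs⟩), ?_⟩
    rintro (hK | ⟨hu, hd, -⟩)
    · exact K0Z_antitone j.le_succ hK
    · exact ⟨hu, hd⟩
  have hdisj : Disjoint (K0Z p (j + 1)) (dCosetZ p (K0Z p n) !![1, 0; (p : ℤ_[p]) ^ j, 1]) :=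
    Set.disjoint_left.mpr fun h hK hV => ((mem_dCosetZ_K0Z_iff hj hjn h).mp hV).2.2 hK.2
  rw [hunion, Set.indicator_union_of_disjoint hdisj]
  rfl

lemma Yfun_eq_indicator_K0Z {n r : ℕ} (hr : 1 ≤ r) (hrn : r ≤ n) :
    Yfun p n r = (K0Z p r).indicator (fun _ => 1) := by
  induction hrn using Nat.decreasingInduction with
  | self =>
    funext h
    simp [Yfun, onefun, Finset.Icc_eq_empty (show ¬ n ≤ n - 1 by omega)]
  | of_succ r hrn ih =>
    funext h
    rw [indicator_K0Z_eq_add_Vfun hr hrn, ← ih (by omega)]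
    simp only [Yfun]
    rw [← Finset.insert_Icc_add_one_left_eq_Icc (show r ≤ n - 1 by omega),
      Finset.sum_insert (by simp)]
    ring

end HeckeY

section Measure

variable {p : ℕ} [Fact p.Prime]

lemma natCast_eq_of_pow_dvd_sub {m t t' : ℕ} (ht : t < p ^ m) (ht' : t' < p ^ m)
    (hdvd : (p : ℤ_[p]) ^ m ∣ (t : ℤ_[p]) - t') : t = t' := by
  have hint : (p : ℤ_[p]) ^ m ∣ (((t : ℤ) - t' : ℤ) : ℤ_[p]) := by push_cast; exact hdvd
  rw [PadicInt.pow_p_dvd_int_iff] at hint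
  have hmod : t' ≡ t [MOD p ^ m] := Nat.modEq_iff_dvd.mpr (by exact_mod_cast hint)
  exact (hmod.eq_of_lt_of_lt ht' ht).symm

lemma lowerUnitriangular_mul_mem_K0Z_iff (n : ℕ) (c : ℤ_[p]) (g : Matrix (Fin 2) (Fin 2) ℤ_[p]) :
    !![1, 0; c, 1] * g ∈ K0Z p n ↔ IsUnit g.det ∧ (p : ℤ_[p]) ^ n ∣ c * g 0 0 + g 1 0 := by
  simp only [K0Z, Set.mem_ofPred_eq, Matrix.det_mul, Matrix.det_lowerUnitriangular, one_mul,
    Matrix.lowerUnitriangular_mul_apply_one_zero]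

lemma lowerUnitriangular_mem_K0Z {m : ℕ} {c : ℤ_[p]} (hc : (p : ℤ_[p]) ^ m ∣ c) :
    !![1, 0; c, 1] ∈ K0Z p m :=
  ⟨by simp, by simpa using hc⟩

/-- `y(t pˡ) K₀(pⁿ)`; for `t < p ^ (n - l)` these are the left cosets of `K₀(pⁿ)` in `K₀(pˡ)`. -/
abbrev K0ZCoset (p : ℕ) [Fact p.Prime] (n l t : ℕ) : Set (Matrix (Fin 2) (Fin 2) ℤ_[p]) :=
  (!![1, 0; -((t : ℤ_[p]) * p ^ l), 1] * ·) ⁻¹' K0Z p n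

lemma K0ZCoset_subset {n l : ℕ} (hln : l ≤ n) (t : ℕ) : K0ZCoset p n l t ⊆ K0Z p l := by
  intro g hg
  obtain ⟨hdet, hdvd⟩ := (lowerUnitriangular_mul_mem_K0Z_iff n _ g).mp hg
  refine ⟨hdet, (dvd_add_right ?_).mp ((pow_dvd_pow _ hln).trans hdvd)⟩
  exact ((dvd_mul_left _ _).neg_right).mul_right _

lemma K0Z_subset_biUnion_K0ZCoset {n l : ℕ} (hl : 1 ≤ l) (hln : l ≤ n) :
    K0Z p l ⊆ ⋃ t ∈ Finset.range (p ^ (n - l)), K0ZCoset p n l t := by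
  intro g hg
  obtain ⟨e, hc⟩ := hg.2
  obtain ⟨a', ha'⟩ := (isUnit_diag_of_mem_K0Z hl hg).1.exists_right_inv
  obtain ⟨w, hw⟩ := Ideal.mem_span_singleton.mp (PadicInt.appr_spec (n - l) (e * a'))
  refine Set.mem_biUnion (Finset.mem_range.mpr (PadicInt.appr_lt (e * a') (n - l))) ?_
  refine (lowerUnitriangular_mul_mem_K0Z_iff n _ g).mpr ⟨hg.1, g 0 0 * w, ?_⟩
  rw [← pow_mul_pow_sub (p : ℤ_[p]) hln]
  linear_combination hc + (p ^ l * g 0 0) * hw - (p ^ l * e) * ha'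

lemma pairwiseDisjoint_K0ZCoset {n l : ℕ} (hl : 1 ≤ l) (hln : l ≤ n) :
    (Finset.range (p ^ (n - l)) : Set ℕ).PairwiseDisjoint (K0ZCoset p n l) := by
  intro t ht t' ht' hne
  refine Set.disjoint_left.mpr fun g hg hg' => hne ?_
  have hunit := (isUnit_diag_of_mem_K0Z hl (K0ZCoset_subset hln t hg)).1
  have hdvd := dvd_sub ((lowerUnitriangular_mul_mem_K0Z_iff n _ g).mp hg').2
    ((lowerUnitriangular_mul_mem_K0Z_iff n _ g).mp hg).2
  rw [← pow_mul_pow_sub (p : ℤ_[p]) hln,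
    show -((t' : ℤ_[p]) * p ^ l) * g 0 0 + g 1 0 - (-((t : ℤ_[p]) * p ^ l) * g 0 0 + g 1 0)
      = p ^ l * (((t : ℤ_[p]) - t') * g 0 0) by ring,
    mul_dvd_mul_iff_left (pow_ne_zero _ PadicInt.prime_p.ne_zero),
    hunit.dvd_mul_right] at hdvd
  exact natCast_eq_of_pow_dvd_sub (Finset.mem_range.mp ht) (Finset.mem_range.mp ht') hdvd

lemma measure_K0Z [MeasurableSpace (Matrix (Fin 2) (Fin 2) ℤ_[p])]
    [BorelSpace (Matrix (Fin 2) (Fin 2) ℤ_[p])] {μ : Measure (Matrix (Fin 2) (Fin 2) ℤ_[p])}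
    {n l : ℕ} (hl : 1 ≤ l) (hln : l ≤ n) (hμ : ∀ a ∈ K0Z p l, μ.map (a * ·) = μ) :
    μ (K0Z p l) = p ^ (n - l) * μ (K0Z p n) := by
  have hunion : K0Z p l = ⋃ t ∈ Finset.range (p ^ (n - l)), K0ZCoset p n l t :=
    (K0Z_subset_biUnion_K0ZCoset hl hln).antisymm
      (Set.iUnion₂_subset fun t _ => K0ZCoset_subset hln t)
  have hcoset : ∀ t, μ (K0ZCoset p n l t) = μ (K0Z p n) := by
    intro t
    rw [← Measure.map_apply (measurable_const_mul _) (measurableSet_K0Z n),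
      hμ _ (lowerUnitriangular_mem_K0Z ((dvd_mul_left _ _).neg_right))]
  rw [hunion, measure_biUnion_finset (pairwiseDisjoint_K0ZCoset hl hln)
    (fun t _ => measurable_const_mul _ (measurableSet_K0Z n))]
  simp [hcoset]

end Measure

section Convolution

variable {p : ℕ} [Fact p.Prime] [MeasurableSpace (Matrix (Fin 2) (Fin 2) ℤ_[p])]
  [BorelSpace (Matrix (Fin 2) (Fin 2) ℤ_[p])] {μ : Measure (Matrix (Fin 2) (Fin 2) ℤ_[p])}
  {n r l : ℕ}

lemma measureReal_K0Z (hμ : IsHaarK p n μ) (hr : 1 ≤ r) (hrn : r ≤ n) :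
    μ.real (K0Z p r) = p ^ (n - r) := by
  rw [measureReal_def, measure_K0Z hr hrn (fun a ha => hμ.left_inv a ha.1), hμ.normal]
  simp

lemma convZ_Yfun_Yfun_of_ge (hμ : IsHaarK p n μ) (hl : 1 ≤ l) (hlr : l ≤ r) (hrn : r ≤ n)
    (h : Matrix (Fin 2) (Fin 2) ℤ_[p]) :
    convZ p μ (Yfun p n r) (Yfun p n l) h = (p : ℂ) ^ (n - r) * Yfun p n l h := by
  simp only [convZ, Yfun_eq_indicator_K0Z hl (hlr.trans hrn),
    Yfun_eq_indicator_K0Z (hl.trans hlr) hrn]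
  rw [(isGLSubgroup_K0Z l).integral_indicator_mul_indicator_inv_mul_of_subset_left
    (K0Z_antitone hlr) (measurableSet_K0Z r), measureReal_K0Z hμ (hl.trans hlr) hrn]
  push_cast
  rfl

lemma convZ_Yfun_Yfun_of_le (hμ : IsHaarK p n μ) (hl : 1 ≤ l) (hlr : l ≤ r) (hrn : r ≤ n)
    (h : Matrix (Fin 2) (Fin 2) ℤ_[p]) :
    convZ p μ (Yfun p n l) (Yfun p n r) h = (p : ℂ) ^ (n - r) * Yfun p n l h := by
  simp only [convZ, Yfun_eq_indicator_K0Z hl (hlr.trans hrn),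
    Yfun_eq_indicator_K0Z (hl.trans hlr) hrn]
  rw [(isGLSubgroup_K0Z l).integral_indicator_mul_indicator_inv_mul_of_subset_right
    (fun a ha => hμ.left_inv a ha.1) (isGLSubgroup_K0Z r) (K0Z_antitone hlr)
    (measurableSet_K0Z r), measureReal_K0Z hμ (hl.trans hlr) hrn]
  push_cast
  rfl

end Convolution

/-- `Y_{n-r} * Y_{n-r} = p^r Y_{n-r}` for `0 ≤ r ≤ n-1`, and
`Y_r * Y_l = p^{n-r} Y_l = Y_l * Y_r` whenever `r ≥ l`. -/
theorem stmt8 (p : ℕ) [Fact p.Prime] (n : ℕ) (hn : 2 ≤ n)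
    [mM : MeasurableSpace (Matrix (Fin 2) (Fin 2) ℤ_[p])]
    (hB : mM = borel (Matrix (Fin 2) (Fin 2) ℤ_[p]))
    (μ : Measure (Matrix (Fin 2) (Fin 2) ℤ_[p])) (hμ : IsHaarK p n μ) :
    (∀ r, r ≤ n - 1 → ∀ h,
      convZ p μ (Yfun p n (n - r)) (Yfun p n (n - r)) h =
        (p : ℂ) ^ r * Yfun p n (n - r) h) ∧
    (∀ r l, 1 ≤ l → l ≤ r → r ≤ n → ∀ h,
      convZ p μ (Yfun p n r) (Yfun p n l) h = (p : ℂ) ^ (n - r) * Yfun p n l h ∧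
      convZ p μ (Yfun p n l) (Yfun p n r) h = (p : ℂ) ^ (n - r) * Yfun p n l h) := by
  have : BorelSpace (Matrix (Fin 2) (Fin 2) ℤ_[p]) := ⟨hB⟩
  refine ⟨fun r hr h => ?_, fun r l hl hlr hrn h =>
    ⟨convZ_Yfun_Yfun_of_ge hμ hl hlr hrn h, convZ_Yfun_Yfun_of_le hμ hl hlr hrn h⟩⟩
  simpa [Nat.sub_sub_self (show r ≤ n by omega)] using
    convZ_Yfun_Yfun_of_ge hμ (show 1 ≤ n - r by omega) le_rfl (Nat.sub_le n r) h
end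

section
/- Let p be prime and n ≥ 1. The representation I(n) = Ind_{K_0(p^n)}^{K} 1 of K = GL_2(Z_p) by right translation on functions K → C left-invariant under K_0(p^n) has dimension [K : K_0(p^n)] = p^{n-1}(p+1), and decomposes as a direct sum of exactly n+1 pairwise non-isomorphic irreducible representations, each appearing with multiplicity one. -/
/-!
Reducing the bottom row modulo `pⁿ` identifies `K₀(pⁿ)\K` with the projective line
`ℙ¹(ℤ/pⁿ)`, so `I(n)` is the permutation representation of `GL₂(ℤ/pⁿ)` on functions on
`ℙ¹(ℤ/pⁿ)`, a set of `pⁿ⁻¹(p+1)` points. The filtration `I(0) ⊂ I(1) ⊂ ⋯ ⊂ I(n)` is strictly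
increasing, so its successive orthogonal complements are `n+1` nonzero invariant pieces. On the
other hand `GL₂(ℤ/pⁿ)` has only `n+1` orbits on pairs of points, represented by
`([0:1], [pᵏ:1])`, so the commutant of the representation has dimension at most `n+1`. The
orthogonal projections onto the pieces are `n+1` linearly independent intertwiners, hence they
span the commutant, and every intertwiner acts by a scalar on each piece. This forces every piece
to be irreducible and no two of them to be isomorphic.
-/

open Matrix

/-- `I(n) = Ind_{K₀(pⁿ)}^K 1`: complex functions on matrices over `ℤ_p`
supported on `K = GL₂(ℤ_p)` and invariant under left translation by `K₀(pⁿ)`. -/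
noncomputable def Isub (p : ℕ) [Fact p.Prime] (n : ℕ) :
    Submodule ℂ (Matrix (Fin 2) (Fin 2) ℤ_[p] → ℂ) where
  carrier := {φ | (∀ k ∈ K0Z p n, ∀ g, φ (k * g) = φ g) ∧
    ∀ g : Matrix (Fin 2) (Fin 2) ℤ_[p], ¬ IsUnit g.det → φ g = 0}
  zero_mem' := ⟨fun _ _ _ => rfl, fun _ _ => rfl⟩
  add_mem' := by
    rintro a b ⟨ha1, ha2⟩ ⟨hb1, hb2⟩
    exact ⟨fun k hk g => by simp only [Pi.add_apply, ha1 k hk g, hb1 k hk g],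
      fun g hg => by simp only [Pi.add_apply, ha2 g hg, hb2 g hg, add_zero]⟩
  smul_mem' := by
    rintro c a ⟨ha1, ha2⟩
    exact ⟨fun k hk g => by simp only [Pi.smul_apply, ha1 k hk g],
      fun g hg => by simp only [Pi.smul_apply, ha2 g hg, smul_zero]⟩

/-- A subspace is invariant under right translation by `K = GL₂(ℤ_p)`. -/
def RightInvariant (p : ℕ) [Fact p.Prime]
    (W : Submodule ℂ (Matrix (Fin 2) (Fin 2) ℤ_[p] → ℂ)) : Prop :=
  ∀ g : Matrix (Fin 2) (Fin 2) ℤ_[p], IsUnit g.det →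
    ∀ φ ∈ W, (fun x => φ (x * g)) ∈ W

open Module MulOpposite

namespace Submodule

variable {𝕜 E : Type*} [RCLike 𝕜] [NormedAddCommGroup E] [InnerProductSpace 𝕜 E]

def orthIncrement (F : ℕ → Submodule 𝕜 E) : ℕ → Submodule 𝕜 E
  | 0 => F 0
  | i + 1 => F (i + 1) ⊓ (F i)ᗮ

variable {F : ℕ → Submodule 𝕜 E} {i : ℕ}

lemma orthIncrement_le (F : ℕ → Submodule 𝕜 E) : ∀ i, orthIncrement F i ≤ F i
  | 0 => le_rfl
  | _ + 1 => inf_le_left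

lemma pairwise_isOrtho_orthIncrement (hF : Monotone F) :
    Pairwise (orthIncrement F · ⟂ orthIncrement F ·) := by
  have hlt : ∀ i j, i < j → orthIncrement F j ⟂ orthIncrement F i := by
    rintro i (_ | j) hij
    · omega
    · exact (isOrtho_iff_le.mpr inf_le_right).mono_right
        ((orthIncrement_le F i).trans (hF (Nat.le_of_lt_succ hij)))
  intro i j hij
  rcases lt_or_gt_of_ne hij with h | h
  · exact (hlt i j h).symm
  · exact hlt j i h

lemma iSup_orthIncrement [∀ i, (F i).HasOrthogonalProjection] (hF : Monotone F) (n : ℕ) :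
    ⨆ i : Fin (n + 1), orthIncrement F i = F n := by
  refine le_antisymm (iSup_le fun i => (orthIncrement_le F i).trans (hF i.is_le)) ?_
  suffices ∀ m ≤ n, F m ≤ ⨆ i : Fin (n + 1), orthIncrement F i from this n le_rfl
  intro m hm
  induction m with
  | zero => exact le_iSup (fun i : Fin (n + 1) => orthIncrement F i) 0
  | succ m ih =>
    rw [← sup_orthogonal_inf_of_hasOrthogonalProjection (hF m.le_succ), inf_comm]
    exact sup_le (ih (by omega))
      (le_iSup (fun i : Fin (n + 1) => orthIncrement F i) ⟨m + 1, by omega⟩)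

lemma orthIncrement_succ_ne_bot [(F i).HasOrthogonalProjection] (hF : Monotone F)
    (h : F i ≠ F (i + 1)) : orthIncrement F (i + 1) ≠ ⊥ := by
  intro hbot
  apply h
  rw [← sup_orthogonal_inf_of_hasOrthogonalProjection (hF i.le_succ), inf_comm]
  change F i = F i ⊔ orthIncrement F (i + 1)
  rw [hbot, sup_bot_eq]

end Submodule

namespace Representation

section Unitary

variable {𝕜 E G : Type*} [RCLike 𝕜] [NormedAddCommGroup E] [InnerProductSpace 𝕜 E]
  [Group G] {ρ : Representation 𝕜 G E}

def IsUnitary (ρ : Representation 𝕜 G E) : Prop :=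
  ∀ g x y, inner 𝕜 (ρ g x) (ρ g y) = inner 𝕜 x y

lemma mem_invtSubmodule_iff_forall_mem_of_mem {U : Submodule 𝕜 E} :
    U ∈ ρ.invtSubmodule ↔ ∀ g, ∀ v ∈ U, ρ g v ∈ U :=
  ρ.mem_invtSubmodule

namespace IsUnitary

lemma orthogonal_mem_invtSubmodule (hρ : ρ.IsUnitary) {U : Submodule 𝕜 E}
    (hU : U ∈ ρ.invtSubmodule) : Uᗮ ∈ ρ.invtSubmodule := by
  rw [mem_invtSubmodule_iff_forall_mem_of_mem] at hU ⊢
  intro g v hv u hu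
  rw [← ρ.self_inv_apply g u, hρ]
  exact hv _ (hU g⁻¹ u hu)

lemma orthIncrement_mem_invtSubmodule (hρ : ρ.IsUnitary) {F : ℕ → Submodule 𝕜 E}
    (hF : ∀ i, F i ∈ ρ.invtSubmodule) : ∀ i, Submodule.orthIncrement F i ∈ ρ.invtSubmodule
  | 0 => hF 0
  | i + 1 => ρ.invtSubmodule.infClosed (hF (i + 1)) (hρ.orthogonal_mem_invtSubmodule (hF i))

lemma starProjection_map (hρ : ρ.IsUnitary) {U : Submodule 𝕜 E} [U.HasOrthogonalProjection]
    (hU : U ∈ ρ.invtSubmodule) (g : G) (v : E) :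
    U.starProjection (ρ g v) = ρ g (U.starProjection v) := by
  refine Submodule.eq_starProjection_of_mem_of_inner_eq_zero
    (mem_invtSubmodule_iff_forall_mem_of_mem.mp hU g _ (U.starProjection_apply_mem v))
    fun w hw => ?_
  have hperp : ρ g (v - U.starProjection v) ∈ Uᗮ :=
    mem_invtSubmodule_iff_forall_mem_of_mem.mp (hρ.orthogonal_mem_invtSubmodule hU) g _
      (U.sub_starProjection_mem_orthogonal v)
  rw [← map_sub, ← inner_conj_symm, (Submodule.mem_orthogonal _ _).mp hperp w hw, map_zero]

lemma starProjection_mem_centralizer (hρ : ρ.IsUnitary) {U : Submodule 𝕜 E}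
    [U.HasOrthogonalProjection] (hU : U ∈ ρ.invtSubmodule) :
    (U.starProjection : E →ₗ[𝕜] E) ∈ Subalgebra.centralizer 𝕜 (Set.range ρ) := by
  rintro _ ⟨g, rfl⟩
  ext v
  exact (hρ.starProjection_map hU g v).symm

lemma eq_bot_or_eq_of_le (hρ : ρ.IsUnitary) [FiniteDimensional 𝕜 E] {V W : Submodule 𝕜 E}
    (hV : ∀ T ∈ Subalgebra.centralizer 𝕜 (Set.range ρ), ∃ c : 𝕜, ∀ v ∈ V, T v = c • v)
    (hW : W ∈ ρ.invtSubmodule) (hWV : W ≤ V) : W = ⊥ ∨ W = V := by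
  refine or_iff_not_imp_left.mpr fun hW₀ => le_antisymm hWV fun v hv => ?_
  obtain ⟨c, hc⟩ := hV _ (hρ.starProjection_mem_centralizer hW)
  obtain ⟨w, hw, hw₀⟩ := W.ne_bot_iff.mp hW₀
  have hc₁ : c = 1 := by
    have hcw := hc w (hWV hw)
    rw [ContinuousLinearMap.coe_coe, Submodule.starProjection_eq_self_iff.mpr hw] at hcw
    have h0 : (c - 1) • w = 0 := by rw [sub_smul, one_smul, ← hcw, sub_self]
    exact sub_eq_zero.mp ((smul_eq_zero.mp h0).resolve_right hw₀)
  have hcv := hc v hv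
  rwa [hc₁, one_smul, ContinuousLinearMap.coe_coe, Submodule.starProjection_eq_self_iff] at hcv

lemma not_exists_equiv (hρ : ρ.IsUnitary) [FiniteDimensional 𝕜 E] {V V' : Submodule 𝕜 E}
    (hV : ∀ T ∈ Subalgebra.centralizer 𝕜 (Set.range ρ), ∃ c : 𝕜, ∀ v ∈ V, T v = c • v)
    (hinv : V ∈ ρ.invtSubmodule) (hne : V ≠ ⊥) (hdisj : Disjoint V V') (e : V ≃ₗ[𝕜] V')
    (he : ∀ g (u u' : V), (u' : E) = ρ g u → (e u' : E) = ρ g (e u)) : False := by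
  set T : E →ₗ[𝕜] E :=
    V'.subtype ∘ₗ e.toLinearMap ∘ₗ (V.orthogonalProjectionOnto : E →ₗ[𝕜] V)
  have hT : T ∈ Subalgebra.centralizer 𝕜 (Set.range ρ) := by
    rintro _ ⟨g, rfl⟩
    ext x
    refine (he g _ _ ?_).symm
    simp [hρ.starProjection_map hinv g x]
  obtain ⟨c, hc⟩ := hV T hT
  obtain ⟨v, hv, hv₀⟩ := V.ne_bot_iff.mp hne
  have hTv : T v = e ⟨v, hv⟩ := by
    simp [T, Submodule.orthogonalProjectionOnto_mem_subspace_eq_self ⟨v, hv⟩]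
  have hzero : (e ⟨v, hv⟩ : E) = 0 := by
    refine Submodule.disjoint_def.mp hdisj _ ?_ (e ⟨v, hv⟩).2
    rw [← hTv, hc v hv]
    exact V.smul_mem c hv
  exact hv₀ (by simpa using hzero)

end IsUnitary

lemma sum_smul_starProjection_apply [FiniteDimensional 𝕜 E] {ι : Type*} [Fintype ι]
    {V : ι → Submodule 𝕜 E} (hV : Pairwise (V · ⟂ V ·)) (c : ι → 𝕜) {i : ι} {v : E}
    (hv : v ∈ V i) : (∑ j, c j • ((V j).starProjection : E →ₗ[𝕜] E)) v = c i • v := by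
  classical
  rw [LinearMap.sum_apply, Finset.sum_eq_single i]
  · simp [Submodule.starProjection_eq_self_iff.mpr hv]
  · intro j _ hji
    simp [(Submodule.starProjection_apply_eq_zero_iff _).mpr ((hV hji).ge hv)]
  · simp

/-- The orthogonal projections onto the `V i` are linearly independent elements of the
commutant, hence span it. -/
lemma IsUnitary.exists_smul_of_mem_centralizer (hρ : ρ.IsUnitary) [FiniteDimensional 𝕜 E]
    {ι : Type*} [Fintype ι] {V : ι → Submodule 𝕜 E} (horth : Pairwise (V · ⟂ V ·))
    (hne : ∀ i, V i ≠ ⊥) (hinv : ∀ i, V i ∈ ρ.invtSubmodule)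
    (hdim : finrank 𝕜 (Subalgebra.centralizer 𝕜 (Set.range ρ)) ≤ Fintype.card ι)
    {T : E →ₗ[𝕜] E} (hT : T ∈ Subalgebra.centralizer 𝕜 (Set.range ρ)) (i : ι) :
    ∃ c : 𝕜, ∀ v ∈ V i, T v = c • v := by
  set P : ι → E →ₗ[𝕜] E := fun j => (V j).starProjection
  have hli : LinearIndependent 𝕜 P := by
    rw [Fintype.linearIndependent_iff]
    intro c hc j
    obtain ⟨v, hv, hv₀⟩ := (V j).ne_bot_iff.mp (hne j)
    have hcv := LinearMap.congr_fun hc v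
    rw [sum_smul_starProjection_apply horth c hv] at hcv
    exact (smul_eq_zero.mp hcv).resolve_right hv₀
  have hspan : Submodule.span 𝕜 (Set.range P) =
      Subalgebra.toSubmodule (Subalgebra.centralizer 𝕜 (Set.range ρ)) :=
    Submodule.eq_of_le_of_finrank_le
      (Submodule.span_le.mpr (Set.range_subset_iff.mpr
        fun j => hρ.starProjection_mem_centralizer (hinv j)))
      (by rw [finrank_span_eq_card hli]; exact hdim)
  have hTspan : T ∈ Submodule.span 𝕜 (Set.range P) := by rw [hspan]; exact hT
  obtain ⟨c, rfl⟩ := (Submodule.mem_span_range_iff_exists_fun 𝕜).mp hTspan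
  exact ⟨c i, fun v hv => sum_smul_starProjection_apply horth c hv⟩

end Unitary

section RightMulAction

variable {𝕜 G X : Type*} [RCLike 𝕜] [Group G] [MulAction Gᵐᵒᵖ X]

variable (𝕜 G X) in
noncomputable def ofRightMulAction : Representation 𝕜 G (EuclideanSpace 𝕜 X) where
  toFun g :=
    { toFun f := WithLp.toLp 2 fun x => f (op g • x)
      map_add' _ _ := rfl
      map_smul' _ _ := rfl }
  map_one' := LinearMap.ext fun f => PiLp.ext fun x => congrArg f (one_smul _ x)
  map_mul' _ _ := LinearMap.ext fun f => PiLp.ext fun x => congrArg f (mul_smul _ _ x)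

lemma ofRightMulAction_apply (g : G) (f : EuclideanSpace 𝕜 X) (x : X) :
    ofRightMulAction 𝕜 G X g f x = f (op g • x) :=
  rfl

lemma isUnitary_ofRightMulAction [Fintype X] : (ofRightMulAction 𝕜 G X).IsUnitary := by
  intro g f f'
  simp only [PiLp.inner_apply, ofRightMulAction_apply]
  exact Fintype.sum_equiv (MulAction.toPerm (op g)) _ _ fun x => rfl

lemma ofRightMulAction_single [DecidableEq X] (g : G) (x : X) (c : 𝕜) :
    ofRightMulAction 𝕜 G X g (EuclideanSpace.single (op g • x) c) =
      EuclideanSpace.single x c := by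
  ext y
  simp [ofRightMulAction_apply, PiLp.single_apply]

/-- An intertwiner `T` is determined by the coefficients `(T δ_y) x`, which are constant on the
orbits of pairs `(x, y)`. -/
lemma finrank_centralizer_ofRightMulAction_le [Fintype X] {ι : Type*} [Fintype ι] (a b : ι → X)
    (horb : ∀ x y : X, ∃ i, ∃ g : G, op g • a i = x ∧ op g • b i = y) :
    finrank 𝕜 (Subalgebra.centralizer 𝕜 (Set.range (ofRightMulAction 𝕜 G X))) ≤
      Fintype.card ι := by
  classical
  let Θ : Subalgebra.centralizer 𝕜 (Set.range (ofRightMulAction 𝕜 G X)) →ₗ[𝕜] ι → 𝕜 :=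
    { toFun T i := (T : Module.End 𝕜 _) (EuclideanSpace.single (b i) 1) (a i)
      map_add' _ _ := rfl
      map_smul' _ _ := rfl }
  suffices Function.Injective Θ by
    simpa using LinearMap.finrank_le_finrank_of_injective this
  rw [← LinearMap.ker_eq_bot, Submodule.eq_bot_iff]
  rintro ⟨T, hT⟩ hΘ
  ext1
  refine (EuclideanSpace.basisFun X 𝕜).toBasis.ext fun y => PiLp.ext fun x => ?_
  obtain ⟨i, g, rfl, rfl⟩ := horb x y
  have hcomm : ofRightMulAction 𝕜 G X g (T (EuclideanSpace.single (op g • b i) 1)) =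
      T (EuclideanSpace.single (b i) 1) := by
    rw [← ofRightMulAction_single g (b i) (1 : 𝕜)]
    exact LinearMap.congr_fun (hT _ ⟨g, rfl⟩) _
  simp only [OrthonormalBasis.coe_toBasis, EuclideanSpace.basisFun_apply]
  exact (congrArg (· (a i)) hcomm).trans (congrFun hΘ i)

end RightMulAction

end Representation

section ProjectiveLine

variable {R : Type*} [CommRing R]

variable (R) in
/-- Over a local ring this is the usual unimodularity of a row vector. -/
def unimodularRows : SubMulAction Rˣ (Fin 2 → R) where
  carrier := {v | IsUnit (v 0) ∨ IsUnit (v 1)}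
  smul_mem' u v hv := by simpa [Units.smul_def] using hv

lemma mem_unimodularRows {v : Fin 2 → R} :
    v ∈ unimodularRows R ↔ IsUnit (v 0) ∨ IsUnit (v 1) :=
  Iff.rfl

variable (R) in
def ProjLine : Type _ := MulAction.orbitRel.Quotient Rˣ (unimodularRows R)

namespace ProjLine

def mk (v : Fin 2 → R) (hv : v ∈ unimodularRows R) : ProjLine R :=
  Quotient.mk _ ⟨v, hv⟩

lemma mk_surjective (x : ProjLine R) : ∃ v hv, mk v hv = x := by
  obtain ⟨⟨v, hv⟩, rfl⟩ := Quotient.exists_rep x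
  exact ⟨v, hv, rfl⟩

lemma mk_eq_mk_iff {v w : Fin 2 → R} {hv hw} :
    mk v hv = mk w hw ↔ ∃ u : Rˣ, u • w = v :=
  Quotient.eq.trans
    ⟨fun ⟨u, hu⟩ => ⟨u, congrArg Subtype.val hu⟩, fun ⟨u, hu⟩ => ⟨u, Subtype.ext hu⟩⟩

lemma mk_congr {v w : Fin 2 → R} (h : v = w) {hv hw} : mk v hv = mk w hw := by
  subst h
  rfl

instance [Finite R] : Finite (ProjLine R) := Quotient.finite _

noncomputable instance [Finite R] : Fintype (ProjLine R) := Fintype.ofFinite _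

def affine (c : R) : ProjLine R := mk ![c, 1] (mem_unimodularRows.mpr (Or.inr (by simp)))

def nearInfty (d : {d : R // ¬IsUnit d}) : ProjLine R :=
  mk ![1, d] (mem_unimodularRows.mpr (Or.inl (by simp)))

lemma bijective_sum_elim_affine_nearInfty :
    Function.Bijective (Sum.elim (affine (R := R)) nearInfty) := by
  refine ⟨?_, fun x => ?_⟩
  · rintro (c | ⟨d, hd⟩) (c' | ⟨d', hd'⟩) h <;>
      obtain ⟨u, hu⟩ := mk_eq_mk_iff.mp h <;>
      have h0 := congrFun hu 0 <;> have h1 := congrFun hu 1 <;>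
      simp only [Pi.smul_apply, Units.smul_def, smul_eq_mul, Matrix.cons_val_zero,
        Matrix.cons_val_one, mul_one] at h0 h1
    · rw [h1, one_mul] at h0
      rw [h0]
    · exact absurd (h1 ▸ isUnit_one : IsUnit ((u : R) * d')) (by simpa using hd')
    · exact absurd (h1 ▸ u.isUnit) hd
    · rw [h0, one_mul] at h1
      subst h1
      rfl
  · obtain ⟨v, hv, rfl⟩ := mk_surjective x
    by_cases h1 : IsUnit (v 1)
    · refine ⟨Sum.inl (h1.unit⁻¹ * v 0), mk_eq_mk_iff.mpr ⟨h1.unit⁻¹, funext fun i => ?_⟩⟩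
      fin_cases i <;> simp [Units.smul_def]
    · have h0 : IsUnit (v 0) := hv.resolve_right h1
      refine ⟨Sum.inr ⟨h0.unit⁻¹ * v 1, by simpa using h1⟩,
        mk_eq_mk_iff.mpr ⟨h0.unit⁻¹, funext fun i => ?_⟩⟩
      fin_cases i <;> simp [Units.smul_def]

lemma card_eq [Fintype R] [DecidablePred (IsUnit : R → Prop)] :
    Fintype.card (ProjLine R) = Fintype.card R + Fintype.card {d : R // ¬IsUnit d} := by
  rw [← Fintype.card_sum]
  exact (Fintype.card_congr (Equiv.ofBijective _ bijective_sum_elim_affine_nearInfty)).symm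

variable [IsLocalRing R]

lemma vecMul_mem_unimodularRows {v : Fin 2 → R} (hv : v ∈ unimodularRows R)
    (γ : GL (Fin 2) R) : v ᵥ* (γ : Matrix (Fin 2) (Fin 2) R) ∈ unimodularRows R := by
  set w := v ᵥ* (γ : Matrix (Fin 2) (Fin 2) R)
  have hvw : v = w ᵥ* ((γ⁻¹ : GL (Fin 2) R) : Matrix (Fin 2) (Fin 2) R) := by
    rw [vecMul_vecMul, ← GeneralLinearGroup.coe_mul, mul_inv_cancel, GeneralLinearGroup.coe_one,
      vecMul_one]
  by_contra hw
  have hw' : ∀ i, w i ∈ IsLocalRing.maximalIdeal R := by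
    simp only [mem_unimodularRows, not_or] at hw
    intro i
    fin_cases i
    exacts [hw.1, hw.2]
  have hmax : ∀ j, v j ∈ IsLocalRing.maximalIdeal R := fun j => by
    rw [hvw, vecMul, dotProduct, Fin.sum_univ_two]
    exact add_mem (Ideal.mul_mem_right _ _ (hw' 0)) (Ideal.mul_mem_right _ _ (hw' 1))
  exact hv.elim (hmax 0) (hmax 1)

instance : MulAction (GL (Fin 2) R)ᵐᵒᵖ (unimodularRows R) where
  smul γ v := ⟨v.1 ᵥ* (γ.unop : Matrix (Fin 2) (Fin 2) R), vecMul_mem_unimodularRows v.2 γ.unop⟩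
  one_smul _ := Subtype.ext (vecMul_one _)
  mul_smul _ _ v := Subtype.ext (vecMul_vecMul v.1 _ _).symm

instance : SMulCommClass Rˣ (GL (Fin 2) R)ᵐᵒᵖ (unimodularRows R) where
  smul_comm u _ v := Subtype.ext (smul_vecMul (u : R) v.1 _).symm

instance : MulAction (GL (Fin 2) R)ᵐᵒᵖ (ProjLine R) where
  smul γ := Quotient.map (γ • ·) fun _ w ⟨u, hu⟩ => ⟨u, by rw [← hu]; exact smul_comm u γ w⟩
  one_smul x := Quotient.inductionOn x fun v => congrArg _ (one_smul _ v)
  mul_smul γ δ x := Quotient.inductionOn x fun v => congrArg _ (mul_smul γ δ v)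

lemma op_smul_mk (γ : GL (Fin 2) R) {v : Fin 2 → R} (hv : v ∈ unimodularRows R) :
    op γ • mk v hv =
      mk (v ᵥ* (γ : Matrix (Fin 2) (Fin 2) R)) (vecMul_mem_unimodularRows hv γ) :=
  rfl

lemma exists_smul_affine_zero_eq (x : ProjLine R) : ∃ γ : GL (Fin 2) R, op γ • affine 0 = x := by
  obtain ⟨v, hv, rfl⟩ := mk_surjective x
  obtain ⟨a, b, hab⟩ : ∃ a b : R, IsUnit (a * v 1 - b * v 0) :=
    hv.elim (fun h0 => ⟨0, -1, by simpa using h0⟩) (fun h1 => ⟨1, 0, by simpa using h1⟩)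
  refine ⟨GeneralLinearGroup.mk'' !![a, b; v 0, v 1] (by simpa [det_fin_two_of] using hab),
    mk_congr (funext fun i => ?_)⟩
  fin_cases i <;> simp [vecMul, dotProduct, Fin.sum_univ_two]

lemma op_smul_affine_zero_eq_iff (γ : GL (Fin 2) R) :
    op γ • affine 0 = (affine 0 : ProjLine R) ↔ γ 1 0 = 0 := by
  rw [affine, op_smul_mk, mk_eq_mk_iff]
  constructor
  · rintro ⟨u, hu⟩
    simpa [vecMul, dotProduct] using (congrFun hu 0).symm
  · intro h
    have hdet : IsUnit (γ 1 1) := by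
      have := (Matrix.isUnit_iff_isUnit_det _).mp γ.isUnit
      rw [det_fin_two] at this
      exact isUnit_of_mul_isUnit_right (by simpa [h] using this)
    refine ⟨hdet.unit, funext fun i => ?_⟩
    fin_cases i <;> simp [vecMul, dotProduct, Units.smul_def, h]

lemma exists_smul_affine_pow_eq (π : R) {k : ℕ} {w : Fin 2 → R} (hw : w ∈ unimodularRows R)
    {u : Rˣ} (hu : w 0 = π ^ k * u) :
    ∃ β : GL (Fin 2) R, op β • affine 0 = (affine 0 : ProjLine R) ∧
      op β • affine (π ^ k) = mk w hw := by
  obtain ⟨b, δ, hδ, hbδ⟩ : ∃ b δ : R, IsUnit δ ∧ π ^ k * b + δ = w 1 := by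
    by_cases hπ : IsUnit (π ^ k)
    · exact ⟨hπ.unit⁻¹ * (w 1 - 1), 1, isUnit_one, by rw [← mul_assoc, hπ.mul_val_inv]; ring⟩
    · refine ⟨0, w 1, hw.resolve_left ?_, by simp⟩
      rw [hu]
      exact fun h => hπ (isUnit_of_mul_isUnit_left h)
  refine ⟨GeneralLinearGroup.mk'' !![(u : R), b; 0, δ]
    (by simpa [det_fin_two_of] using u.isUnit.mul hδ), ?_, ?_⟩
  · refine (op_smul_mk _ _).trans (mk_eq_mk_iff.mpr ⟨hδ.unit, funext fun i => ?_⟩)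
    fin_cases i <;> simp [vecMul, dotProduct, Units.smul_def]
  · refine (op_smul_mk _ _).trans (mk_congr (funext fun i => ?_))
    fin_cases i <;> simp [vecMul, dotProduct, hu, hbδ]

lemma exists_smul_affine_pair {π : R} {N : ℕ} (hπ : ∀ c : R, ∃ k ≤ N, ∃ u : Rˣ, c = π ^ k * u)
    (x y : ProjLine R) :
    ∃ k : Fin (N + 1), ∃ γ : GL (Fin 2) R,
      op γ • affine 0 = x ∧ op γ • affine (π ^ (k : ℕ)) = y := by
  obtain ⟨γ, rfl⟩ := exists_smul_affine_zero_eq x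
  obtain ⟨w, hw, hwy⟩ := mk_surjective (op γ⁻¹ • y)
  obtain ⟨k, hk, u, hu⟩ := hπ (w 0)
  obtain ⟨β, hβ₀, hβ⟩ := exists_smul_affine_pow_eq π hw hu
  refine ⟨⟨k, Nat.lt_succ_of_le hk⟩, β * γ, ?_, ?_⟩
  · rw [op_mul, mul_smul, hβ₀]
  · rw [op_mul, mul_smul, hβ, hwy, smul_smul, ← op_mul, inv_mul_cancel, op_one, one_smul]

end ProjLine

end ProjectiveLine

namespace ZMod

variable {p : ℕ} [hp : Fact p.Prime]

instance {n : ℕ} [NeZero n] : IsLocalRing (ZMod (p ^ n)) :=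
  haveI : Fact (1 < p ^ n) := ⟨Nat.one_lt_pow (NeZero.ne n) hp.out.one_lt⟩
  IsLocalRing.of_surjective (PadicInt.toZModPow n) (ZMod.ringHom_surjective _)

lemma exists_eq_pow_mul_unit {n : ℕ} (c : ZMod (p ^ n)) :
    ∃ k ≤ n, ∃ u : (ZMod (p ^ n))ˣ, c = (p : ZMod (p ^ n)) ^ k * u := by
  rcases eq_or_ne c.val 0 with h | h
  · refine ⟨n, le_rfl, 1, ?_⟩
    rw [(ZMod.val_eq_zero c).mp h, Units.val_one, mul_one, ← Nat.cast_pow, ZMod.natCast_self]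
  obtain ⟨k, r, hr, hval⟩ := Nat.exists_eq_pow_mul_and_not_dvd h p hp.out.ne_one
  have hr₀ : r ≠ 0 := by
    rintro rfl
    exact hr (dvd_zero p)
  have hk : p ^ k < p ^ n :=
    (Nat.le_mul_of_pos_right _ (Nat.pos_of_ne_zero hr₀)).trans_lt (hval ▸ ZMod.val_lt c)
  refine ⟨k, ((Nat.pow_lt_pow_iff_right hp.out.one_lt).mp hk).le,
    ZMod.unitOfCoprime r ((Nat.Coprime.pow_left n
      ((Nat.Prime.coprime_iff_not_dvd hp.out).mpr hr)).symm), ?_⟩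
  rw [ZMod.coe_unitOfCoprime, ← ZMod.natCast_zmod_val c, hval]
  push_cast
  rfl

lemma card_nonunits_prime_pow (n : ℕ) [DecidablePred (IsUnit : ZMod (p ^ (n + 1)) → Prop)] :
    Fintype.card {d : ZMod (p ^ (n + 1)) // ¬IsUnit d} = p ^ n := by
  have hunits : Fintype.card {d : ZMod (p ^ (n + 1)) // IsUnit d} = p ^ n * (p - 1) := by
    rw [← Nat.totient_prime_pow_succ hp.out, ← ZMod.card_units_eq_totient]
    exact Fintype.card_congr ⟨fun d => d.2.unit, fun u => ⟨u, u.isUnit⟩, fun _ => rfl,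
      fun _ => Units.ext rfl⟩
  rw [Fintype.card_subtype_compl, ZMod.card, hunits]
  obtain ⟨q, rfl⟩ : ∃ q, p = q + 1 := ⟨p - 1, (Nat.succ_pred_eq_of_pos hp.out.pos).symm⟩
  exact Nat.sub_eq_of_eq_add (by rw [Nat.add_sub_cancel]; ring)

end ZMod

section Bridge

open ProjLine

variable {p : ℕ} [Fact p.Prime] {m : ℕ}

lemma mem_Isub {φ : Matrix (Fin 2) (Fin 2) ℤ_[p] → ℂ} :
    φ ∈ Isub p m ↔ (∀ k ∈ K0Z p m, ∀ g, φ (k * g) = φ g) ∧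
      ∀ g : Matrix (Fin 2) (Fin 2) ℤ_[p], ¬IsUnit g.det → φ g = 0 :=
  Iff.rfl

variable [NeZero m]

lemma Matrix.GeneralLinearGroup.map_toZModPow_surjective :
    Function.Surjective (GeneralLinearGroup.map (PadicInt.toZModPow (p := p) m) (n := Fin 2)) := by
  intro γ
  obtain ⟨s, hs⟩ := (ZMod.ringHom_surjective (PadicInt.toZModPow (p := p) m)).hasRightInverse
  set A : Matrix (Fin 2) (Fin 2) ℤ_[p] := (γ : Matrix (Fin 2) (Fin 2) _).map s
  have hA : A.map (PadicInt.toZModPow m) = γ := by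
    ext i j
    exact hs _
  have hdet : IsUnit A.det := by
    refine isUnit_of_map_unit (PadicInt.toZModPow m) _ ?_
    rw [RingHom.map_det, RingHom.mapMatrix_apply, hA]
    exact (Matrix.isUnit_iff_isUnit_det _).mp γ.isUnit
  exact ⟨GeneralLinearGroup.mk'' A hdet, Units.ext hA⟩

variable (p m) in
/-- The point of `ℙ¹(ℤ/pᵐ)` given by the bottom row of `g` modulo `pᵐ`; it identifies
`K₀(pᵐ)\K` with `ℙ¹(ℤ/pᵐ)`. -/
noncomputable def cosetPoint (g : GL (Fin 2) ℤ_[p]) : ProjLine (ZMod (p ^ m)) :=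
  op (GeneralLinearGroup.map (PadicInt.toZModPow m) g) • (affine 0 : ProjLine (ZMod (p ^ m)))

lemma cosetPoint_mul (g h : GL (Fin 2) ℤ_[p]) :
    cosetPoint p m (g * h) =
      op (GeneralLinearGroup.map (PadicInt.toZModPow m) h) • cosetPoint p m g := by
  rw [cosetPoint, cosetPoint, map_mul, op_mul, mul_smul]

lemma cosetPoint_surjective : Function.Surjective (cosetPoint p m) := by
  intro x
  obtain ⟨γ, rfl⟩ := exists_smul_affine_zero_eq x
  obtain ⟨g, rfl⟩ := GeneralLinearGroup.map_toZModPow_surjective γ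
  exact ⟨g, rfl⟩

lemma cosetPoint_mul_eq_iff (k g : GL (Fin 2) ℤ_[p]) :
    cosetPoint p m (k * g) = cosetPoint p m g ↔
      (k : Matrix (Fin 2) (Fin 2) ℤ_[p]) ∈ K0Z p m := by
  rw [cosetPoint_mul, ← one_mul g, cosetPoint_mul, one_mul, smul_left_cancel_iff, cosetPoint,
    cosetPoint, map_one, op_one, one_smul, op_smul_affine_zero_eq_iff,
    Matrix.GeneralLinearGroup.map_apply, ← RingHom.mem_ker, PadicInt.ker_toZModPow,
    Ideal.mem_span_singleton, K0Z, Set.mem_ofPred_eq, ← Matrix.isUnit_iff_isUnit_det]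
  exact (and_iff_right k.isUnit).symm

variable (p m) in
noncomputable abbrev projLineRep :
    Representation ℂ (GL (Fin 2) (ZMod (p ^ m))) (EuclideanSpace ℂ (ProjLine (ZMod (p ^ m)))) :=
  Representation.ofRightMulAction ℂ _ _

open Classical in
variable (p m) in
noncomputable def toInduced :
    EuclideanSpace ℂ (ProjLine (ZMod (p ^ m))) →ₗ[ℂ] (Matrix (Fin 2) (Fin 2) ℤ_[p] → ℂ) where
  toFun f g := if hg : IsUnit g.det then f (cosetPoint p m (GeneralLinearGroup.mk'' g hg)) else 0
  map_add' f f' := by ext g; by_cases hg : IsUnit g.det <;> simp [hg]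
  map_smul' c f := by ext g; by_cases hg : IsUnit g.det <;> simp [hg]

lemma toInduced_apply_of_isUnit (f : EuclideanSpace ℂ (ProjLine (ZMod (p ^ m))))
    {g : Matrix (Fin 2) (Fin 2) ℤ_[p]} (hg : IsUnit g.det) :
    toInduced p m f g = f (cosetPoint p m (GeneralLinearGroup.mk'' g hg)) :=
  dif_pos hg

lemma toInduced_apply_of_not_isUnit (f : EuclideanSpace ℂ (ProjLine (ZMod (p ^ m))))
    {g : Matrix (Fin 2) (Fin 2) ℤ_[p]} (hg : ¬IsUnit g.det) : toInduced p m f g = 0 :=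
  dif_neg hg

lemma toInduced_apply_coe (f : EuclideanSpace ℂ (ProjLine (ZMod (p ^ m))))
    (g : GL (Fin 2) ℤ_[p]) : toInduced p m f g = f (cosetPoint p m g) :=
  toInduced_apply_of_isUnit f (Matrix.isUnits_det_units g)

lemma toInduced_injective : Function.Injective (toInduced p m) := by
  intro f f' h
  refine PiLp.ext fun x => ?_
  obtain ⟨g, rfl⟩ := cosetPoint_surjective x
  simpa only [toInduced_apply_coe] using congrFun h g

lemma toInduced_mem_Isub (f : EuclideanSpace ℂ (ProjLine (ZMod (p ^ m)))) :
    toInduced p m f ∈ Isub p m := by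
  refine mem_Isub.mpr ⟨fun k hk g => ?_, fun g hg => toInduced_apply_of_not_isUnit f hg⟩
  by_cases hg : IsUnit g.det
  · have hkg : IsUnit (k * g).det := by
      rw [det_mul]
      exact hk.1.mul hg
    rw [toInduced_apply_of_isUnit f hkg, toInduced_apply_of_isUnit f hg,
      show GeneralLinearGroup.mk'' (k * g) hkg =
        GeneralLinearGroup.mk'' k hk.1 * GeneralLinearGroup.mk'' g hg from Units.ext rfl,
      (cosetPoint_mul_eq_iff _ _).mpr (by rwa [GeneralLinearGroup.val_mk''])]
  · have hkg : ¬IsUnit (k * g).det := by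
      rw [det_mul]
      exact fun h => hg (isUnit_of_mul_isUnit_right h)
    rw [toInduced_apply_of_not_isUnit f hkg, toInduced_apply_of_not_isUnit f hg]

lemma range_toInduced : LinearMap.range (toInduced p m) = Isub p m := by
  refine le_antisymm (LinearMap.range_le_iff_comap.mpr (eq_top_iff.mpr
    fun f _ => toInduced_mem_Isub f)) fun φ hφ => ?_
  obtain ⟨hφ, hφ₀⟩ := mem_Isub.mp hφ
  choose s hs using cosetPoint_surjective (p := p) (m := m)
  refine ⟨WithLp.toLp 2 fun x => φ (s x), funext fun g => ?_⟩
  by_cases hg : IsUnit g.det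
  · set G := GeneralLinearGroup.mk'' g hg
    set k := G * (s (cosetPoint p m G))⁻¹
    have hk : (k : Matrix (Fin 2) (Fin 2) ℤ_[p]) ∈ K0Z p m :=
      (cosetPoint_mul_eq_iff k _).mp (by rw [inv_mul_cancel_right, hs])
    have hkg : (k : Matrix (Fin 2) (Fin 2) ℤ_[p]) * s (cosetPoint p m G) = g := by
      rw [← GeneralLinearGroup.coe_mul, inv_mul_cancel_right]
      rfl
    rw [toInduced_apply_of_isUnit _ hg]
    conv_rhs => rw [← hkg]
    exact (hφ _ hk _).symm
  · rw [toInduced_apply_of_not_isUnit _ hg, hφ₀ g hg]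

lemma toInduced_projLineRep (f : EuclideanSpace ℂ (ProjLine (ZMod (p ^ m))))
    (h : GL (Fin 2) ℤ_[p]) :
    toInduced p m (projLineRep p m (GeneralLinearGroup.map (PadicInt.toZModPow m) h) f) =
      fun x => toInduced p m f (x * (h : Matrix (Fin 2) (Fin 2) ℤ_[p])) := by
  funext x
  by_cases hx : IsUnit x.det
  · have hxh : IsUnit (x * (h : Matrix (Fin 2) (Fin 2) ℤ_[p])).det := by
      rw [det_mul]
      exact hx.mul (Matrix.isUnits_det_units h)
    rw [toInduced_apply_of_isUnit _ hx, toInduced_apply_of_isUnit _ hxh,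
      show GeneralLinearGroup.mk'' _ hxh = GeneralLinearGroup.mk'' x hx * h from Units.ext rfl,
      cosetPoint_mul]
    rfl
  · have hxh : ¬IsUnit (x * (h : Matrix (Fin 2) (Fin 2) ℤ_[p])).det := by
      rw [det_mul]
      exact fun h => hx (isUnit_of_mul_isUnit_left h)
    rw [toInduced_apply_of_not_isUnit _ hx, toInduced_apply_of_not_isUnit _ hxh]

lemma rightInvariant_map_toInduced
    {U : Submodule ℂ (EuclideanSpace ℂ (ProjLine (ZMod (p ^ m))))}
    (hU : U ∈ (projLineRep p m).invtSubmodule) : RightInvariant p (U.map (toInduced p m)) := by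
  rintro g hg _ ⟨f, hf, rfl⟩
  exact ⟨_, Representation.mem_invtSubmodule_iff_forall_mem_of_mem.mp hU _ f hf,
    toInduced_projLineRep f (GeneralLinearGroup.mk'' g hg)⟩

lemma comap_toInduced_mem_invtSubmodule {W : Submodule ℂ (Matrix (Fin 2) (Fin 2) ℤ_[p] → ℂ)}
    (hW : RightInvariant p W) : W.comap (toInduced p m) ∈ (projLineRep p m).invtSubmodule := by
  refine Representation.mem_invtSubmodule_iff_forall_mem_of_mem.mpr fun γ f hf => ?_
  obtain ⟨h, rfl⟩ := GeneralLinearGroup.map_toZModPow_surjective γ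
  rw [Submodule.mem_comap, toInduced_projLineRep]
  exact hW h (Matrix.isUnits_det_units h) _ hf

end Bridge

section Levels

open ProjLine

variable {p : ℕ} [Fact p.Prime]

lemma Isub_mono : Monotone (Isub p) := by
  intro i j hij φ hφ
  obtain ⟨hφ, hφ₀⟩ := mem_Isub.mp hφ
  exact mem_Isub.mpr ⟨fun k hk => hφ k ⟨hk.1, (pow_dvd_pow _ hij).trans hk.2⟩, hφ₀⟩

lemma rightInvariant_Isub (n : ℕ) : RightInvariant p (Isub p n) := by
  intro h _ φ hφ
  obtain ⟨hφ, hφ₀⟩ := mem_Isub.mp hφ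
  refine mem_Isub.mpr ⟨fun k hk g => by simp only [Matrix.mul_assoc, hφ k hk],
    fun g hg => hφ₀ _ ?_⟩
  rw [det_mul]
  exact fun hgh => hg (isUnit_of_mul_isUnit_left hgh)

lemma finrank_Isub_zero : finrank ℂ (Isub p 0) = 1 := by
  classical
  set χ : Matrix (Fin 2) (Fin 2) ℤ_[p] → ℂ := fun g => if IsUnit g.det then 1 else 0
  have hχ : Isub p 0 = ℂ ∙ χ := by
    refine le_antisymm (fun φ hφ => ?_) ((Submodule.span_singleton_le_iff_mem _ _).mpr ?_)
    · obtain ⟨hφ, hφ₀⟩ := mem_Isub.mp hφ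
      refine Submodule.mem_span_singleton.mpr ⟨φ 1, funext fun g => ?_⟩
      by_cases hg : IsUnit g.det
      · simpa [χ, hg] using (hφ g ⟨hg, by simp⟩ 1).symm
      · simp [χ, hg, hφ₀ g hg]
    · refine mem_Isub.mpr ⟨fun k hk g => ?_, fun g hg => by simp [χ, hg]⟩
      simp only [χ, det_mul, IsUnit.mul_iff, hk.1, true_and]
  rw [hχ, finrank_span_singleton]
  exact fun h => one_ne_zero (by simpa [χ] using congrFun h 1 : (1 : ℂ) = 0)

lemma finrank_Isub_eq_card {m : ℕ} [NeZero m] :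
    finrank ℂ (Isub p m) = Fintype.card (ProjLine (ZMod (p ^ m))) := by
  rw [← range_toInduced, LinearMap.finrank_range_of_inj toInduced_injective,
    finrank_euclideanSpace]

lemma finrank_Isub {m : ℕ} (hm : 1 ≤ m) : finrank ℂ (Isub p m) = p ^ (m - 1) * (p + 1) := by
  classical
  obtain ⟨m, rfl⟩ : ∃ k, m = k + 1 := ⟨m - 1, by omega⟩
  rw [finrank_Isub_eq_card, ProjLine.card_eq, ZMod.card, ZMod.card_nonunits_prime_pow,
    Nat.add_sub_cancel]
  ring

lemma finrank_Isub_lt_succ (i : ℕ) : finrank ℂ (Isub p i) < finrank ℂ (Isub p (i + 1)) := by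
  have hp := (Fact.out : p.Prime).one_lt
  rw [finrank_Isub (m := i + 1) (Nat.le_add_left 1 i), Nat.add_sub_cancel]
  rcases i with _ | i
  · rw [finrank_Isub_zero, pow_zero, one_mul]
    omega
  · rw [finrank_Isub (m := i + 1) (Nat.le_add_left 1 i), Nat.add_sub_cancel]
    exact Nat.mul_lt_mul_of_lt_of_le (Nat.pow_lt_pow_right hp (by omega)) le_rfl (by omega)

lemma finrank_comap_of_le_range {R M N : Type*} [Ring R] [AddCommGroup M] [Module R M]
    [AddCommGroup N] [Module R N] {f : M →ₗ[R] N} (hf : Function.Injective f)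
    {W : Submodule R N} (hW : W ≤ LinearMap.range f) : finrank R (W.comap f) = finrank R W := by
  rw [(Submodule.equivMapOfInjective f hf (W.comap f)).finrank_eq, Submodule.map_comap_eq_self hW]

variable {n : ℕ} [NeZero n]

variable (p n) in
noncomputable def levelFlag (i : ℕ) : Submodule ℂ (EuclideanSpace ℂ (ProjLine (ZMod (p ^ n)))) :=
  (Isub p i).comap (toInduced p n)

variable (p n) in
/-- For `1 ≤ i ≤ n` this is the model of the orthogonal complement of `I(i - 1)` in `I(i)`, the
part of `I(n)` of level exactly `pⁱ`; `levelPiece p n 0` is the model of the constants `I(0)`. -/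
noncomputable def levelPiece (i : ℕ) : Submodule ℂ (EuclideanSpace ℂ (ProjLine (ZMod (p ^ n)))) :=
  Submodule.orthIncrement (levelFlag p n) i

lemma levelFlag_mono : Monotone (levelFlag p n) :=
  fun _ _ h => Submodule.comap_mono (Isub_mono h)

lemma finrank_levelFlag {i : ℕ} (hi : i ≤ n) :
    finrank ℂ (levelFlag p n i) = finrank ℂ (Isub p i) :=
  finrank_comap_of_le_range toInduced_injective (range_toInduced (p := p) (m := n) ▸ Isub_mono hi)

lemma levelFlag_ne_succ {i : ℕ} (hi : i < n) : levelFlag p n i ≠ levelFlag p n (i + 1) := by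
  intro h
  have := finrank_Isub_lt_succ (p := p) i
  rw [← finrank_levelFlag hi.le, ← finrank_levelFlag hi, h] at this
  exact lt_irrefl _ this

lemma levelPiece_mem_invtSubmodule (i : ℕ) :
    levelPiece p n i ∈ (projLineRep p n).invtSubmodule :=
  Representation.isUnitary_ofRightMulAction.orthIncrement_mem_invtSubmodule
    (fun i => comap_toInduced_mem_invtSubmodule (rightInvariant_Isub i)) i

lemma pairwise_isOrtho_levelPiece : Pairwise (levelPiece p n · ⟂ levelPiece p n ·) :=
  Submodule.pairwise_isOrtho_orthIncrement levelFlag_mono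

lemma levelPiece_ne_bot {i : ℕ} (hi : i ≤ n) : levelPiece p n i ≠ ⊥ := by
  rcases i with _ | i
  · intro h
    have := finrank_levelFlag (p := p) (n := n) (Nat.zero_le n)
    rw [finrank_Isub_zero, show levelFlag p n 0 = ⊥ from h, finrank_bot] at this
    exact zero_ne_one this
  · exact Submodule.orthIncrement_succ_ne_bot levelFlag_mono (levelFlag_ne_succ hi)

lemma iSup_levelPiece : ⨆ i : Fin (n + 1), levelPiece p n i = ⊤ := by
  rw [show (⨆ i : Fin (n + 1), levelPiece p n i) = _ from
    Submodule.iSup_orthIncrement levelFlag_mono n, eq_top_iff]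
  rintro f -
  rw [levelFlag, Submodule.mem_comap, ← range_toInduced]
  exact LinearMap.mem_range_self _ f

lemma finrank_centralizer_projLineRep_le :
    finrank ℂ (Subalgebra.centralizer ℂ (Set.range (projLineRep p n))) ≤
      Fintype.card (Fin (n + 1)) :=
  Representation.finrank_centralizer_ofRightMulAction_le (fun _ => affine 0)
    (fun k => affine ((p : ZMod (p ^ n)) ^ (k : ℕ)))
    (exists_smul_affine_pair ZMod.exists_eq_pow_mul_unit)

lemma levelPiece_exists_smul_of_mem_centralizer (i : Fin (n + 1)) :
    ∀ T ∈ Subalgebra.centralizer ℂ (Set.range (projLineRep p n)),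
      ∃ c : ℂ, ∀ v ∈ levelPiece p n i, T v = c • v := fun _ hT =>
  Representation.isUnitary_ofRightMulAction.exists_smul_of_mem_centralizer
    (V := fun i : Fin (n + 1) => levelPiece p n i)
    (fun _ _ hij => pairwise_isOrtho_levelPiece (Fin.val_ne_of_ne hij))
    (fun i => levelPiece_ne_bot i.is_le) (fun i => levelPiece_mem_invtSubmodule i)
    finrank_centralizer_projLineRep_le hT i

end Levels

section Transport

variable {p : ℕ} [Fact p.Prime] {n : ℕ} [NeZero n]
  {V V' : Submodule ℂ (EuclideanSpace ℂ (ProjLine (ZMod (p ^ n))))}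

lemma map_toInduced_ne_bot (hV : V ≠ ⊥) : V.map (toInduced p n) ≠ ⊥ := by
  simpa using (Submodule.map_injective_of_injective toInduced_injective).ne hV

lemma eq_bot_or_eq_map_toInduced_of_le
    (hV : ∀ T ∈ Subalgebra.centralizer ℂ (Set.range (projLineRep p n)),
      ∃ c : ℂ, ∀ v ∈ V, T v = c • v)
    {W : Submodule ℂ (Matrix (Fin 2) (Fin 2) ℤ_[p] → ℂ)} (hWV : W ≤ V.map (toInduced p n))
    (hW : RightInvariant p W) : W = ⊥ ∨ W = V.map (toInduced p n) := by
  have hmap : (W.comap (toInduced p n)).map (toInduced p n) = W :=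
    Submodule.map_comap_eq_self (hWV.trans LinearMap.map_le_range)
  have hle : W.comap (toInduced p n) ≤ V :=
    (Submodule.comap_mono hWV).trans (Submodule.comap_map_eq_of_injective toInduced_injective V).le
  rcases Representation.isUnitary_ofRightMulAction.eq_bot_or_eq_of_le hV
    (comap_toInduced_mem_invtSubmodule hW) hle with h | h
  · exact Or.inl (by rw [← hmap, h, Submodule.map_bot])
  · exact Or.inr (by rw [← hmap, h])

lemma not_exists_equiv_map_toInduced
    (hV : ∀ T ∈ Subalgebra.centralizer ℂ (Set.range (projLineRep p n)),
      ∃ c : ℂ, ∀ v ∈ V, T v = c • v)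
    (hinv : V ∈ (projLineRep p n).invtSubmodule) (hne : V ≠ ⊥) (hdisj : Disjoint V V') :
    ¬∃ e : V.map (toInduced p n) ≃ₗ[ℂ] V'.map (toInduced p n),
      ∀ g : Matrix (Fin 2) (Fin 2) ℤ_[p], IsUnit g.det →
        ∀ φ ψ : V.map (toInduced p n),
          ((ψ : Matrix (Fin 2) (Fin 2) ℤ_[p] → ℂ) = fun x => (φ : _ → ℂ) (x * g)) →
          ((e ψ : Matrix (Fin 2) (Fin 2) ℤ_[p] → ℂ) = fun x => (e φ : _ → ℂ) (x * g)) := by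
  rintro ⟨e, he⟩
  set ι := Submodule.equivMapOfInjective (toInduced p n) toInduced_injective V
  set ι' := Submodule.equivMapOfInjective (toInduced p n) toInduced_injective V'
  have hι' : ∀ w, toInduced p n (ι'.symm w) = w := fun w => by
    rw [← Submodule.coe_equivMapOfInjective_apply _ toInduced_injective,
      LinearEquiv.apply_symm_apply]
  refine Representation.isUnitary_ofRightMulAction.not_exists_equiv hV hinv hne hdisj
    (ι.trans (e.trans ι'.symm)) fun γ u u' huu' => toInduced_injective ?_
  obtain ⟨h, rfl⟩ := GeneralLinearGroup.map_toZModPow_surjective γ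
  simp only [LinearEquiv.trans_apply]
  rw [toInduced_projLineRep, hι', hι']
  refine he h (Matrix.isUnits_det_units h) (ι u) (ι u') ?_
  simp only [ι, Submodule.coe_equivMapOfInjective_apply, huu', toInduced_projLineRep]

end Transport

/-- `I(n)` has dimension `[K : K₀(pⁿ)] = p^{n-1}(p+1)` and decomposes as a
direct sum of exactly `n+1` pairwise non-isomorphic irreducible
`K`-subrepresentations, each with multiplicity one. -/
theorem stmt11 (p : ℕ) [Fact p.Prime] (n : ℕ) (hn : 1 ≤ n) :
    Module.finrank ℂ ↥(Isub p n) = p ^ (n - 1) * (p + 1) ∧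
    ∃ S : Fin (n + 1) → Submodule ℂ (Matrix (Fin 2) (Fin 2) ℤ_[p] → ℂ),
      (∀ i, S i ≤ Isub p n) ∧
      (∀ i, S i ≠ ⊥) ∧
      (∀ i, RightInvariant p (S i)) ∧
      (∀ i, ∀ W : Submodule ℂ (Matrix (Fin 2) (Fin 2) ℤ_[p] → ℂ),
        W ≤ S i → RightInvariant p W → W = ⊥ ∨ W = S i) ∧
      (∀ i j, i ≠ j →
        ¬ ∃ e : ↥(S i) ≃ₗ[ℂ] ↥(S j),
          ∀ g : Matrix (Fin 2) (Fin 2) ℤ_[p], IsUnit g.det →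
            ∀ φ ψ : ↥(S i),
              ((ψ : Matrix (Fin 2) (Fin 2) ℤ_[p] → ℂ) =
                fun x => (φ : Matrix (Fin 2) (Fin 2) ℤ_[p] → ℂ) (x * g)) →
              ((e ψ : Matrix (Fin 2) (Fin 2) ℤ_[p] → ℂ) =
                fun x => (e φ : Matrix (Fin 2) (Fin 2) ℤ_[p] → ℂ) (x * g))) ∧
      iSupIndep S ∧
      (⨆ i, S i) = Isub p n := by
  have : NeZero n := ⟨by omega⟩
  have hdisj : ∀ i j : Fin (n + 1), i ≠ j → levelPiece p n i ⟂ levelPiece p n j :=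
    fun _ _ hij => pairwise_isOrtho_levelPiece (Fin.val_ne_of_ne hij)
  refine ⟨finrank_Isub hn, fun i => (levelPiece p n i).map (toInduced p n),
    fun _ => range_toInduced (p := p) (m := n) ▸ LinearMap.map_le_range,
    fun i => map_toInduced_ne_bot (levelPiece_ne_bot i.is_le),
    fun i => rightInvariant_map_toInduced (levelPiece_mem_invtSubmodule i),
    fun i _ => eq_bot_or_eq_map_toInduced_of_le (levelPiece_exists_smul_of_mem_centralizer i),
    fun i j hij => not_exists_equiv_map_toInduced (levelPiece_exists_smul_of_mem_centralizer i)
      (levelPiece_mem_invtSubmodule i) (levelPiece_ne_bot i.is_le) (hdisj i j hij).disjoint,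
    LinearMap.iSupIndep_map _ toInduced_injective (OrthogonalFamily.of_pairwise hdisj).independent,
    ?_⟩
  rw [← Submodule.map_iSup, iSup_levelPiece, Submodule.map_top, range_toInduced]
end

section
/- Let N = p^n M with p prime, gcd(p,M) = 1, n ≥ 2, and let 1 ≤ r ≤ n. A complete set of right coset representatives for Γ_0(N) in Γ_0(p^r M) is given by the identity together with the matrices A_{s,j} = [[a_{s,j}, b_{s,j}],[p^j M, p^{n-j} - s M]] ∈ SL_2(Z), where r ≤ j ≤ n-1 and s ranges over Z_p^* / (1 + p^{n-j} Z_p); in particular [Γ_0(p^r M) : Γ_0(N)] = p^{n-r}. -/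
/-!
For `g ∈ Γ₀(p^r M)` with bottom row `(c, d)`, the entry `d` is a unit modulo `p` because `p ∣ c`,
and the right coset `Γ₀(p^n M) g` is determined by the residue `(c / p^r M) d⁻¹ mod p^(n-r)`.
Every residue occurs, already for lower unitriangular `g`, so the index is `p^(n-r)`.

For the explicit representatives, the `p`-adic valuation `j` of `c` (once it is below `n`) is an
invariant of the coset. Writing `c = p^j M u`, the coset of `A_{s,j}` contains `g` exactly when
`u M s ≡ -d mod p^(n-j)`, which determines `s` modulo `p^(n-j)`, and `p ∤ s` since `p ∤ d`.
-/

open Matrix CongruenceSubgroup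

open scoped MatrixGroups

lemma Matrix.SpecialLinearGroup.SL2_mul_inv_apply_one_zero {R : Type*} [CommRing R]
    (a b : SL(2, R)) : (a * b⁻¹) 1 0 = a 1 0 * b 1 1 - a 1 1 * b 1 0 := by
  simp only [SpecialLinearGroup.coe_mul, SpecialLinearGroup.coe_inv, adjugate_fin_two, mul_apply,
    of_apply, cons_val', cons_val_zero, cons_val_one, cons_val_fin_one, Fin.sum_univ_two]
  ring

namespace CongruenceSubgroup

lemma Gamma0_mem_iff_dvd {N : ℕ} {g : SL(2, ℤ)} : g ∈ Gamma0 N ↔ (N : ℤ) ∣ g 1 0 := by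
  rw [Gamma0_mem, ZMod.intCast_zmod_eq_zero_iff_dvd]

/-- `ZMod`'s `⁻¹` is a genuine inverse only on units; `g 1 1` is one when `g ∈ Γ₀(N)` and `N` is
nilpotent mod `m`. -/
def bottomRowRatio (N m : ℕ) (g : SL(2, ℤ)) : ZMod m :=
  ((g 1 0 / N : ℤ) : ZMod m) * ((g 1 1 : ℤ) : ZMod m)⁻¹

variable {N m : ℕ}

lemma isUnit_bottomRight_of_mem_Gamma0 (hN : IsNilpotent (N : ZMod m)) {g : SL(2, ℤ)}
    (hg : g ∈ Gamma0 N) : IsUnit ((g 1 1 : ℤ) : ZMod m) := by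
  obtain ⟨t, ht⟩ := Gamma0_mem_iff_dvd.1 hg
  have hdet : g 0 0 * g 1 1 = 1 + g 0 1 * g 1 0 := by
    linear_combination (det_fin_two g.1).symm.trans g.det_coe
  have hnil : IsNilpotent ((g 0 1 * g 1 0 : ℤ) : ZMod m) := by
    rw [ht]
    push_cast
    exact (Commute.all _ _).isNilpotent_mul_left ((Commute.all _ _).isNilpotent_mul_right hN)
  have hunit := hnil.isUnit_one_add
  rw [← Int.cast_one, ← Int.cast_add, ← hdet, Int.cast_mul] at hunit
  exact isUnit_of_mul_isUnit_right hunit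

lemma mul_inv_mem_Gamma0_mul_iff (hN0 : N ≠ 0) (hN : IsNilpotent (N : ZMod m))
    {a b : SL(2, ℤ)} (ha : a ∈ Gamma0 N) (hb : b ∈ Gamma0 N) :
    a * b⁻¹ ∈ Gamma0 (N * m) ↔ bottomRowRatio N m a = bottomRowRatio N m b := by
  obtain ⟨x, hx⟩ := Gamma0_mem_iff_dvd.1 ha
  obtain ⟨y, hy⟩ := Gamma0_mem_iff_dvd.1 hb
  obtain ⟨u, hu⟩ := isUnit_bottomRight_of_mem_Gamma0 hN ha
  obtain ⟨v, hv⟩ := isUnit_bottomRight_of_mem_Gamma0 hN hb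
  have hN0' : (N : ℤ) ≠ 0 := by exact_mod_cast hN0
  rw [Gamma0_mem_iff_dvd, SpecialLinearGroup.SL2_mul_inv_apply_one_zero, bottomRowRatio,
    bottomRowRatio, hx, hy, Int.mul_ediv_cancel_left _ hN0', Int.mul_ediv_cancel_left _ hN0',
    show N * x * b 1 1 - a 1 1 * (N * y) = N * (x * b 1 1 - y * a 1 1) by ring, Nat.cast_mul,
    mul_dvd_mul_iff_left hN0', ← ZMod.intCast_zmod_eq_zero_iff_dvd, Int.cast_sub, sub_eq_zero,
    Int.cast_mul, Int.cast_mul, ← hu, ← hv, ZMod.inv_coe_unit, ZMod.inv_coe_unit]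
  exact divp_eq_divp_iff.symm

theorem relIndex_Gamma0_mul (hN0 : N ≠ 0) (hN : IsNilpotent (N : ZMod m)) :
    (Gamma0 (N * m)).relIndex (Gamma0 N) = m := by
  let f : Gamma0 N → ZMod m := fun g ↦ bottomRowRatio N m g
  have hf : Function.Surjective f := by
    intro x
    let g : SL(2, ℤ) := ⟨!![1, 0; N * (x.cast : ℤ), 1], by simp⟩
    have hg : g ∈ Gamma0 N := Gamma0_mem_iff_dvd.2 (dvd_mul_right _ _)
    refine ⟨⟨g, hg⟩, ?_⟩
    simp [f, g, bottomRowRatio, hN0]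
  have hker : ∀ a b, QuotientGroup.rightRel ((Gamma0 (N * m)).subgroupOf (Gamma0 N)) a b ↔
      Setoid.ker f a b := fun a b ↦ by
    rw [QuotientGroup.rightRel_apply, Subgroup.mem_subgroupOf, Setoid.ker_def]
    exact (mul_inv_mem_Gamma0_mul_iff hN0 hN b.2 a.2).trans eq_comm
  rw [Subgroup.relIndex, Subgroup.index]
  exact (Nat.card_congr ((QuotientGroup.quotientRightRelEquivQuotientLeftRel _).symm.trans
    ((Quotient.congrRight hker).trans (Setoid.quotientKerEquivOfSurjective f hf)))).trans
    (Nat.card_zmod m)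

end CongruenceSubgroup

lemma Int.exists_lt_dvd_mul_add {m : ℕ} [NeZero m] {a : ℤ} (ha : IsCoprime a m) (b : ℤ) :
    ∃ s : ℕ, s < m ∧ (m : ℤ) ∣ a * s + b := by
  have hu : IsUnit (a : ZMod m) := (ZMod.unitOfIsCoprime a ha).isUnit
  refine ⟨(-(b : ZMod m) * (a : ZMod m)⁻¹).val, ZMod.val_lt _, ?_⟩
  rw [← ZMod.intCast_zmod_eq_zero_iff_dvd]
  push_cast
  rw [ZMod.natCast_zmod_val]
  linear_combination (-(b : ZMod m)) * ZMod.mul_inv_of_unit _ hu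

lemma Int.exists_eq_pow_mul_not_dvd {p t : ℤ} (hp : p.natAbs ≠ 1) {r n : ℕ} (hr : p ^ r ∣ t)
    (hn : ¬ p ^ n ∣ t) : ∃ k u, r ≤ k ∧ k < n ∧ t = p ^ k * u ∧ ¬ p ∣ u := by
  have hfin : FiniteMultiplicity p t :=
    Int.finiteMultiplicity_iff.2 ⟨hp, by rintro rfl; exact hn (dvd_zero _)⟩
  obtain ⟨u, htu, hu⟩ := hfin.exists_eq_pow_mul_and_not_dvd
  refine ⟨_, u, hfin.pow_dvd_iff_le_multiplicity.1 hr, ?_, htu, hu⟩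
  by_contra! h
  exact hn (hfin.pow_dvd_iff_le_multiplicity.2 h)

lemma eq_of_pow_dvd_pow_mul_sub_pow_mul {R : Type*} [CommRing R] [IsDomain R] {p x y : R}
    (hp : p ≠ 0) (hx : ¬ p ∣ x) (hy : ¬ p ∣ y) {j j' n : ℕ} (hj : j < n) (hj' : j' < n)
    (h : p ^ n ∣ p ^ j * x - p ^ j' * y) : j = j' := by
  wlog hle : j ≤ j' generalizing j j' x y
  · refine (this hy hx hj' hj ?_ (le_of_not_ge hle)).symm
    rw [← dvd_neg, neg_sub]
    exact h
  by_contra hne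
  have h1 : p ^ (j + 1) ∣ p ^ j * x - p ^ j' * y := (pow_dvd_pow p (by omega)).trans h
  have h2 : p ^ (j + 1) ∣ p ^ j' * y := (pow_dvd_pow p (by omega)).mul_right y
  have h3 := dvd_add h1 h2
  rw [sub_add_cancel, pow_succ, mul_dvd_mul_iff_left (pow_ne_zero j hp)] at h3
  exact hx h3

lemma not_dvd_pow_sub {R : Type*} [CommRing R] {p x : R} {k : ℕ} (hk : k ≠ 0) (hx : ¬ p ∣ x) :
    ¬ p ∣ p ^ k - x := fun h ↦ hx (by simpa using (dvd_pow_self p hk).sub h)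

section PrimePower

variable {p n M : ℕ}

lemma not_dvd_pow_sub_mul (hp : p.Prime) {k s : ℕ} (hk : k ≠ 0) (hs : ¬ p ∣ s) (hM : ¬ p ∣ M) :
    ¬ (p : ℤ) ∣ (p : ℤ) ^ k - s * M :=
  not_dvd_pow_sub hk (by exact_mod_cast fun h ↦ (hp.dvd_mul.1 h).elim hs hM)

lemma isCoprime_pow_mul_pow_sub_mul (hp : p.Prime) (hpM : ¬ p ∣ M) {j s : ℕ} (hj : j < n)
    (hs : ¬ p ∣ s) : IsCoprime ((p : ℤ) ^ j * M) ((p : ℤ) ^ (n - j) - s * M) := by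
  have hpZ : Prime (p : ℤ) := Nat.prime_iff_prime_int.1 hp
  have hMp : IsCoprime (M : ℤ) p := (hpZ.coprime_iff_not_dvd.2 (by exact_mod_cast hpM)).symm
  refine .mul_left (.pow_left (hpZ.coprime_iff_not_dvd.2 ?_)) ?_
  · exact not_dvd_pow_sub_mul hp (by omega) hs hpM
  · simpa [sub_eq_add_neg, mul_comm] using (hMp.pow_right (n := n - j)).add_mul_left_right (-s)

lemma notMem_Gamma0_of_apply_one_zero (hp : p.Prime) (hM : M ≠ 0) {j : ℕ} (hj : j < n)
    {A : SL(2, ℤ)} (hA : A 1 0 = (p : ℤ) ^ j * M) : A ∉ Gamma0 (p ^ n * M) := by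
  rw [Gamma0_mem_iff_dvd, hA, Nat.cast_mul, Nat.cast_pow,
    mul_dvd_mul_iff_right (by exact_mod_cast hM), pow_dvd_pow_iff (by exact_mod_cast hp.ne_zero)
    (by simpa [Int.isUnit_iff_natAbs_eq] using hp.ne_one)]
  omega

lemma eq_of_mul_inv_mem_Gamma0 (hp : p.Prime) (hpM : ¬ p ∣ M) {j s j' s' : ℕ}
    (hj : j < n) (hj' : j' < n) (hs : s < p ^ (n - j)) (hps : ¬ p ∣ s)
    (hs' : s' < p ^ (n - j')) (hps' : ¬ p ∣ s') {A A' : SL(2, ℤ)}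
    (hA10 : A 1 0 = (p : ℤ) ^ j * M) (hA11 : A 1 1 = (p : ℤ) ^ (n - j) - s * M)
    (hA'10 : A' 1 0 = (p : ℤ) ^ j' * M) (hA'11 : A' 1 1 = (p : ℤ) ^ (n - j') - s' * M)
    (h : A * A'⁻¹ ∈ Gamma0 (p ^ n * M)) : j = j' ∧ s = s' := by
  have hM : (M : ℤ) ≠ 0 := by rintro ⟨⟩; exact hpM (dvd_zero p)
  rw [Gamma0_mem_iff_dvd, SpecialLinearGroup.SL2_mul_inv_apply_one_zero, hA10, hA11, hA'10, hA'11,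
    show (p : ℤ) ^ j * M * ((p : ℤ) ^ (n - j') - s' * M) - ((p : ℤ) ^ (n - j) - s * M) *
      ((p : ℤ) ^ j' * M) = ((p : ℤ) ^ j * ((p : ℤ) ^ (n - j') - s' * M) -
      (p : ℤ) ^ j' * ((p : ℤ) ^ (n - j) - s * M)) * M by ring,
    Nat.cast_mul, Nat.cast_pow, mul_dvd_mul_iff_right hM] at h
  obtain rfl := eq_of_pow_dvd_pow_mul_sub_pow_mul (by exact_mod_cast hp.ne_zero)
    (not_dvd_pow_sub_mul hp (by omega) hps' hpM) (not_dvd_pow_sub_mul hp (by omega) hps hpM)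
    hj hj' h
  refine ⟨rfl, ?_⟩
  rw [← mul_sub, show (p : ℤ) ^ (n - j) - s' * M - ((p : ℤ) ^ (n - j) - s * M) =
    ((s : ℤ) - s') * M by ring, ← pow_sub_mul_pow _ hj.le, mul_comm,
    mul_dvd_mul_iff_left (pow_ne_zero _ (by exact_mod_cast hp.ne_zero))] at h
  have hpM' : IsCoprime ((p : ℤ) ^ (n - j)) M :=
    (Nat.isCoprime_iff_coprime.2 ((hp.coprime_iff_not_dvd).2 hpM)).pow_left
  have hss : (p : ℤ) ^ (n - j) ∣ (s : ℤ) - s' := hpM'.dvd_of_dvd_mul_right h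
  exact ((Nat.modEq_iff_dvd.2 (by exact_mod_cast hss)).eq_of_lt_of_lt hs' hs).symm

lemma exists_mul_inv_mem_Gamma0 (hp : p.Prime) (hpM : ¬ p ∣ M) {r : ℕ} (hr : 1 ≤ r)
    {g : SL(2, ℤ)} (hg : g ∈ Gamma0 (p ^ r * M)) (hgn : g ∉ Gamma0 (p ^ n * M)) :
    ∃ j s : ℕ, r ≤ j ∧ j < n ∧ s < p ^ (n - j) ∧ ¬ p ∣ s ∧
      ∃ A : SL(2, ℤ), A 1 0 = (p : ℤ) ^ j * M ∧
        A 1 1 = (p : ℤ) ^ (n - j) - s * M ∧ g * A⁻¹ ∈ Gamma0 (p ^ n * M) := by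
  have hpZ : Prime (p : ℤ) := Nat.prime_iff_prime_int.1 hp
  rw [Gamma0_mem_iff_dvd, Nat.cast_mul, Nat.cast_pow] at hg hgn
  obtain ⟨t, ht⟩ := hg
  obtain ⟨j, u, hrj, hjn, htu, hpu⟩ := Int.exists_eq_pow_mul_not_dvd (t := (p : ℤ) ^ r * t)
    (by simpa using hp.ne_one) (dvd_mul_right _ _)
    (fun h ↦ hgn (ht ▸ by simpa [mul_right_comm] using mul_dvd_mul_right h (M : ℤ)))
  have hc : g 1 0 = (p : ℤ) ^ j * M * u := by rw [ht]; linear_combination M * htu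
  have hpd : ¬ (p : ℤ) ∣ g 1 1 := fun hd ↦ hpZ.not_isUnit <|
    (g.isCoprime_row 1).isUnit_of_dvd'
      (hc ▸ ((dvd_pow_self _ (by omega)).mul_right _).mul_right _) hd
  have : NeZero (p ^ (n - j)) := ⟨pow_ne_zero _ hp.ne_zero⟩
  have huM : IsCoprime (u * M) ((p ^ (n - j) : ℕ) : ℤ) := by
    have : ¬ (p : ℤ) ∣ u * M := hpZ.dvd_mul.not.2 (not_or.2 ⟨hpu, by exact_mod_cast hpM⟩)
    exact_mod_cast (hpZ.coprime_iff_not_dvd.2 this).symm.pow_right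
  obtain ⟨s, hs, e, he⟩ := Int.exists_lt_dvd_mul_add huM (g 1 1)
  push_cast at he
  have hps : ¬ p ∣ s := fun h ↦ hpd <| by
    have hpe : (p : ℤ) ∣ u * M * s + g 1 1 :=
      he ▸ (dvd_pow_self _ (by omega : n - j ≠ 0)).mul_right e
    simpa using hpe.sub (Dvd.dvd.mul_left (Int.natCast_dvd_natCast.2 h) (u * M))
  obtain ⟨A, hA10, hA11⟩ := (isCoprime_pow_mul_pow_sub_mul hp hpM hjn hps).exists_SL2_row 1
  refine ⟨j, s, hrj, hjn, hs, hps, A, hA10, hA11, ?_⟩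
  rw [Gamma0_mem_iff_dvd, SpecialLinearGroup.SL2_mul_inv_apply_one_zero, hc, hA10, hA11]
  push_cast
  refine ⟨u - e, ?_⟩
  rw [← pow_sub_mul_pow _ hjn.le]
  linear_combination (-(p : ℤ) ^ j * M) * he

end PrimePower

theorem stmt14_general (p n M r : ℕ) (hp : p.Prime) (hpM : ¬ p ∣ M)
    (hr1 : 1 ≤ r) (hr2 : r ≤ n) :
    -- every element of Γ₀(p^r M) lies in one of the listed cosets
    (∀ g : SL(2, ℤ), g ∈ Gamma0 (p ^ r * M) →
      g ∈ Gamma0 (p ^ n * M) ∨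
      ∃ j s : ℕ, r ≤ j ∧ j ≤ n - 1 ∧ s < p ^ (n - j) ∧ ¬ p ∣ s ∧
        ∃ A : SL(2, ℤ), A 1 0 = (p : ℤ) ^ j * M ∧
          A 1 1 = (p : ℤ) ^ (n - j) - s * M ∧ g * A⁻¹ ∈ Gamma0 (p ^ n * M)) ∧
    -- the listed cosets are distinct from the trivial coset …
    (∀ j s : ℕ, r ≤ j → j ≤ n - 1 → s < p ^ (n - j) → ¬ p ∣ s →
      ∀ A : SL(2, ℤ), A 1 0 = (p : ℤ) ^ j * M →
        A 1 1 = (p : ℤ) ^ (n - j) - s * M → A ∉ Gamma0 (p ^ n * M)) ∧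
    -- … and pairwise distinct
    (∀ j s j' s' : ℕ, r ≤ j → j ≤ n - 1 → s < p ^ (n - j) → ¬ p ∣ s →
      r ≤ j' → j' ≤ n - 1 → s' < p ^ (n - j') → ¬ p ∣ s' →
      ∀ A A' : SL(2, ℤ),
        A 1 0 = (p : ℤ) ^ j * M → A 1 1 = (p : ℤ) ^ (n - j) - s * M →
        A' 1 0 = (p : ℤ) ^ j' * M → A' 1 1 = (p : ℤ) ^ (n - j') - s' * M →
        A * A'⁻¹ ∈ Gamma0 (p ^ n * M) → j = j' ∧ s = s') ∧
    -- the index of Γ₀(pⁿM) in Γ₀(p^rM) is p^{n-r}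
    (Gamma0 (p ^ n * M)).relIndex (Gamma0 (p ^ r * M)) = p ^ (n - r) := by
  have hM : M ≠ 0 := by rintro rfl; exact hpM (dvd_zero p)
  refine ⟨fun g hg ↦ ?_, fun j s hj hjn _ _ A hA _ ↦
    notMem_Gamma0_of_apply_one_zero hp hM (by omega) hA,
    fun j s j' s' _ hjn hs hps _ hj'n hs' hps' A A' hA10 hA11 hA'10 hA'11 h ↦
    eq_of_mul_inv_mem_Gamma0 hp hpM (by omega) (by omega) hs hps hs' hps' hA10 hA11 hA'10 hA'11 h,
    ?_⟩
  · by_cases hgn : g ∈ Gamma0 (p ^ n * M)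
    · exact .inl hgn
    obtain ⟨j, s, hrj, hjn, h⟩ := exists_mul_inv_mem_Gamma0 hp hpM hr1 hg hgn
    exact .inr ⟨j, s, hrj, by omega, h⟩
  · have hnil : IsNilpotent ((p ^ r * M : ℕ) : ZMod (p ^ (n - r))) := ⟨n - r, by
      rw [← Nat.cast_pow, ZMod.natCast_eq_zero_iff]
      exact pow_dvd_pow_of_dvd ((dvd_pow_self p (by omega)).mul_right M) _⟩
    have := relIndex_Gamma0_mul (Nat.mul_ne_zero (pow_ne_zero r hp.ne_zero) hM) hnil
    rwa [mul_right_comm, ← pow_add, Nat.add_sub_cancel' hr2] at this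

/-- Right coset representatives of `Γ₀(pⁿM)` in `Γ₀(p^rM)`: the identity
together with the matrices `A_{s,j} = [[a,b],[p^j M, p^{n-j} - sM]]` for
`r ≤ j ≤ n-1` and `s` ranging over `ℤ_p^*/(1+p^{n-j}ℤ_p)` (represented by
naturals `s < p^{n-j}` with `p ∤ s`); in particular the index is `p^{n-r}`. -/
theorem stmt14 (p n M r : ℕ) (hp : p.Prime) (hpM : ¬ p ∣ M) (hM : 0 < M)
    (hn : 2 ≤ n) (hr1 : 1 ≤ r) (hr2 : r ≤ n) :
    -- every element of Γ₀(p^r M) lies in one of the listed cosets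
    (∀ g : SL(2, ℤ), g ∈ Gamma0 (p ^ r * M) →
      g ∈ Gamma0 (p ^ n * M) ∨
      ∃ j s : ℕ, r ≤ j ∧ j ≤ n - 1 ∧ s < p ^ (n - j) ∧ ¬ p ∣ s ∧
        ∃ A : SL(2, ℤ), A 1 0 = (p : ℤ) ^ j * M ∧
          A 1 1 = (p : ℤ) ^ (n - j) - s * M ∧ g * A⁻¹ ∈ Gamma0 (p ^ n * M)) ∧
    -- the listed cosets are distinct from the trivial coset …
    (∀ j s : ℕ, r ≤ j → j ≤ n - 1 → s < p ^ (n - j) → ¬ p ∣ s →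
      ∀ A : SL(2, ℤ), A 1 0 = (p : ℤ) ^ j * M →
        A 1 1 = (p : ℤ) ^ (n - j) - s * M → A ∉ Gamma0 (p ^ n * M)) ∧
    -- … and pairwise distinct
    (∀ j s j' s' : ℕ, r ≤ j → j ≤ n - 1 → s < p ^ (n - j) → ¬ p ∣ s →
      r ≤ j' → j' ≤ n - 1 → s' < p ^ (n - j') → ¬ p ∣ s' →
      ∀ A A' : SL(2, ℤ),
        A 1 0 = (p : ℤ) ^ j * M → A 1 1 = (p : ℤ) ^ (n - j) - s * M →
        A' 1 0 = (p : ℤ) ^ j' * M → A' 1 1 = (p : ℤ) ^ (n - j') - s' * M →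
        A * A'⁻¹ ∈ Gamma0 (p ^ n * M) → j = j' ∧ s = s') ∧
    -- the index of Γ₀(pⁿM) in Γ₀(p^rM) is p^{n-r}
    (Gamma0 (p ^ n * M)).relIndex (Gamma0 (p ^ r * M)) = p ^ (n - r) :=
  stmt14_general p n M r hp hpM hr1 hr2
end

section
/- Let N = pM with p prime not dividing M, f ∈ S_{2k}(Γ_0(M)), and set g(z) = f(pz) ∈ S_{2k}(Γ_0(N)). Then Q_p(g) = p^{1-2k} T_p(f) − g, where Q_p = Ũ_p ∘ W_p on S_{2k}(Γ_0(N)) and T_p is the usual Hecke operator on S_{2k}(Γ_0(M)) satisfying p^{1-2k} T_p(f)(z) = f(pz) + p^{-2k} Σ_{s=0}^{p-1} f((z+s)/p). -/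
open Complex Filter

/-- The upper half plane, as a subset of `ℂ`. -/
def UHP : Set ℂ := {z : ℂ | 0 < z.im}

/-- The weight-`2k` slash operator for an integer matrix `[[a,b],[c,d]]` of
positive determinant: `(f ∣[2k] g)(z) = det(g)^k (cz+d)^{-2k} f((az+b)/(cz+d))`. -/
noncomputable def slash2k (k : ℕ) (a b c d : ℤ) (f : ℂ → ℂ) : ℂ → ℂ :=
  fun z => ((a * d - b * c : ℤ) : ℂ) ^ k * ((c : ℂ) * z + d) ^ (-(2 * k : ℤ)) *
    f (((a : ℂ) * z + b) / ((c : ℂ) * z + d))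

/-- `f : ℂ → ℂ` (restricted to the upper half plane) is a cusp form of weight
`2k` for `Γ₀(N)`: holomorphic on `ℍ`, slash-invariant under `Γ₀(N)`, and
vanishing at all cusps. -/
structure IsCuspForm (N k : ℕ) (f : ℂ → ℂ) : Prop where
  holo : DifferentiableOn ℂ f UHP
  slash_inv : ∀ a b c d : ℤ, a * d - b * c = 1 → (N : ℤ) ∣ c →
    ∀ z ∈ UHP, f (((a : ℂ) * z + b) / ((c : ℂ) * z + d)) =
      ((c : ℂ) * z + d) ^ (2 * k) * f z
  zero_at_cusps : ∀ a b c d : ℤ, a * d - b * c = 1 →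
    Tendsto (fun y : ℝ => slash2k k a b c d f (y * Complex.I)) atTop (nhds 0)

/-- `Ũ_p(f)(z) = p^{-k} Σ_{s=0}^{p-1} f((z+s)/p)`. -/
noncomputable def Utilde (p k : ℕ) (f : ℂ → ℂ) : ℂ → ℂ :=
  fun z => ((p : ℂ) ^ k)⁻¹ * ∑ s ∈ Finset.range p, f ((z + s) / p)

/-- If `N = pM` with `p ∤ M`, `f ∈ S_{2k}(Γ₀(M))` and `g(z) = f(pz)`, then
`Q_p(g) = Ũ_p(W_p g) = p^{1-2k} T_p(f) - g`, where
`p^{1-2k} T_p(f)(z) = f(pz) + p^{-2k} Σ_{s=0}^{p-1} f((z+s)/p)`. -/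
theorem stmt16 (p M k : ℕ) (hp : p.Prime) (hpM : ¬ p ∣ M) (hM : 0 < M)
    (hk : 1 ≤ k) (f : ℂ → ℂ) (hf : IsCuspForm M k f)
    (g : ℂ → ℂ) (hg : ∀ z, g z = f ((p : ℂ) * z))
    (Tpf : ℂ → ℂ)
    (hT : ∀ z ∈ UHP, (p : ℂ) ^ (1 - 2 * (k : ℤ)) * Tpf z =
      f ((p : ℂ) * z) +
        ((p : ℂ) ^ (2 * k))⁻¹ * ∑ s ∈ Finset.range p, f ((z + s) / p))
    (β γ : ℤ) (hβγ : (p : ℤ) ^ 2 * β - (p * M : ℕ) * γ = p) :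
    ∀ z ∈ UHP,
      Utilde p k (slash2k k ((p : ℤ) * β) 1 ((p * M : ℕ) * γ) p g) z =
        (p : ℂ) ^ (1 - 2 * (k : ℤ)) * Tpf z - g z := by
  intro z hz
  have hp0 : (p : ℂ) ≠ 0 := Nat.cast_ne_zero.mpr hp.pos.ne'
  -- key: the slash of g equals p^{-k} f pointwise on UHP
  have key : ∀ w ∈ UHP, slash2k k ((p : ℤ) * β) 1 ((p * M : ℕ) * γ) p g w
      = ((p : ℂ) ^ k)⁻¹ * f w := by
    intro w hw
    have hpz : (p : ℤ) ≠ 0 := by exact_mod_cast hp.pos.ne'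
    have hdet1 : (p : ℤ) * β * 1 - 1 * ((M : ℤ) * γ) = 1 := by
      refine mul_left_cancel₀ hpz ?_
      push_cast at hβγ
      linear_combination hβγ
    have hC : ((M : ℂ) * (γ : ℂ) * w + 1) ≠ 0 := by
      by_cases hc : ((M : ℤ) * γ) = 0
      · have h0 : (M : ℂ) * (γ : ℂ) = 0 := by exact_mod_cast congrArg (Int.cast : ℤ → ℂ) hc
        simp [h0]
      · intro h
        have him : ((M : ℂ) * (γ : ℂ) * w + 1).im = ((M : ℤ) * γ : ℝ) * w.im := by
          push_cast
          simp [Complex.add_im, Complex.mul_im]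
        rw [h] at him
        have hne : ((M : ℤ) * γ : ℝ) ≠ 0 := by exact_mod_cast hc
        have hwim : w.im ≠ 0 := ne_of_gt hw
        simp only [Complex.zero_im] at him
        rcases mul_eq_zero.mp him.symm with h1 | h1
        · exact hne h1
        · exact hwim h1
    have hslash := hf.slash_inv ((p : ℤ) * β) 1 ((M : ℤ) * γ) 1 hdet1 ⟨γ, rfl⟩ w hw
    push_cast at hslash
    unfold slash2k
    have hdet : ((p : ℤ) * β * p - 1 * ((p * M : ℕ) * γ) : ℤ) = (p : ℤ) := by
      push_cast at hβγ ⊢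
      linear_combination hβγ
    rw [hdet, hg]
    push_cast
    set A : ℂ := (p : ℂ) * (β : ℂ) * w + 1 with hA
    set C : ℂ := (M : ℂ) * (γ : ℂ) * w + 1 with hCdef
    have e : (p : ℂ) * (M : ℂ) * (γ : ℂ) * w + (p : ℂ) = (p : ℂ) * C := by
      rw [hCdef]; ring
    rw [e]
    have e2 : (p : ℂ) * (A / ((p : ℂ) * C)) = A / C := by
      rw [mul_div_assoc', mul_div_mul_left _ _ hp0]
    rw [e2, hslash]
    have hzp : ((p : ℂ) * C) ^ (-(2 * (k : ℤ))) = (((p : ℂ) * C) ^ (2 * k : ℕ))⁻¹ := by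
      rw [zpow_neg]
      norm_cast
    rw [hzp]
    have hCpow : C ^ (2 * k) ≠ 0 := pow_ne_zero _ hC
    field_simp
    rw [mul_pow]
    ring
  -- each translate lies in UHP
  have hUHP : ∀ s : ℕ, ((z + (s : ℂ)) / (p : ℂ)) ∈ UHP := by
    intro s
    have him : ((z + (s : ℂ)) / (p : ℂ)).im = (z.im) / (p : ℝ) := by
      rw [show ((p : ℂ)) = ((p : ℝ) : ℂ) by push_cast; ring, Complex.div_ofReal_im]
      simp
    have : (0 : ℝ) < z.im / (p : ℝ) := by
      apply div_pos hz
      exact_mod_cast hp.pos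
    simpa [UHP, him] using this
  show ((p : ℂ) ^ k)⁻¹ * ∑ s ∈ Finset.range p,
      slash2k k ((p : ℤ) * β) 1 ((p * M : ℕ) * γ) p g ((z + s) / p) = _
  have hsum : ∑ s ∈ Finset.range p,
      slash2k k ((p : ℤ) * β) 1 ((p * M : ℕ) * γ) p g ((z + s) / p)
      = ∑ s ∈ Finset.range p, ((p : ℂ) ^ k)⁻¹ * f ((z + s) / p) :=
    Finset.sum_congr rfl fun s _ => key _ (hUHP s)
  rw [hsum, ← Finset.mul_sum, hT z hz, hg, add_sub_cancel_left,
    ← mul_assoc, ← mul_inv, ← pow_add, two_mul]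
end
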